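/- arXiv:0709.3138 — 12 statements merged into one kernel-verified Lean document; each statement's English description precedes it below -/
import Mathlib

section
/- If H is an r-partite intersecting hypergraph with at most 2r-4 edges, then the cover number of H is at most r-2 (i.e., there exist r-2 vertices meeting every edge). -/
/-- `E` is an `r`-partite hypergraph with vertex-class map `p`:
every edge contains exactly one vertex from each class. -/
def Rpartite {V : Type*} (r : ℕ) (p : V → Fin r) (E : Finset (Finset V)) : Prop :=
  ∀ e ∈ E, ∀ i : Fin r, ∃! v, v ∈ e ∧ p v = i

/-- Every two edges share a vertex. -/
def Intersecting {V : Type*} (E : Finset (Finset V)) : Prop :=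
  ∀ e ∈ E, ∀ f ∈ E, ∃ v, v ∈ e ∧ v ∈ f

/-- `C` meets every edge of `E`. -/
def IsCover {V : Type*} (E : Finset (Finset V)) (C : Finset V) : Prop :=
  ∀ e ∈ E, ∃ v ∈ C, v ∈ e

/-- The degree of a vertex: the number of edges containing it. -/
def degree {V : Type*} [DecidableEq V] (E : Finset (Finset V)) (v : V) : ℕ :=
  (E.filter (fun e => v ∈ e)).card

theorem cover_key {V : Type*} : ∀ (k : ℕ) (E : Finset (Finset V)), Intersecting E →
    E.card ≤ 2 * k → ∃ C : Finset V, IsCover E C ∧ C.card ≤ k := by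
  classical
  intro k
  induction k with
  | zero =>
    intro E _ h
    have : E = ∅ := Finset.card_eq_zero.mp (by omega)
    subst this
    exact ⟨∅, fun e he => absurd he (by simp), by simp⟩
  | succ k ih =>
    intro E hint hcard
    rcases Finset.eq_empty_or_nonempty E with rfl | ⟨e, he⟩
    · exact ⟨∅, fun e he => absurd he (by simp), by simp⟩
    by_cases h1 : E.card ≤ 1
    · obtain ⟨v, hv, _⟩ := hint e he e he
      refine ⟨{v}, ?_, by simp⟩
      intro f hf
      have hfe : f = e := Finset.card_le_one.mp h1 f hf e he
      exact ⟨v, Finset.mem_singleton_self v, hfe ▸ hv⟩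
    · push_neg at h1
      obtain ⟨f, hf, hfe⟩ := Finset.exists_mem_ne h1 e
      obtain ⟨v, hve, hvf⟩ := hint e he f hf
      set E' := E.filter (fun g => v ∉ g) with hE'
      have hsub : E' ⊆ E := Finset.filter_subset _ _
      have hint' : Intersecting E' := fun a ha b hb => hint a (hsub ha) b (hsub hb)
      have hcard' : E'.card ≤ 2 * k := by
        have h2 : 1 < (E.filter (fun g => v ∈ g)).card := by
          refine Finset.one_lt_card.mpr ⟨e, ?_, f, ?_, ?_⟩ <;>
            simp [Finset.mem_filter, he, hf, hve, hvf, Ne.symm hfe]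
        have := Finset.card_filter_add_card_filter_not (s := E)
          (p := fun g => v ∈ g)
        simp only [hE']
        omega
      obtain ⟨C, hC, hCcard⟩ := ih E' hint' hcard'
      refine ⟨insert v C, ?_, ?_⟩
      · intro g hg
        by_cases hvg : v ∈ g
        · exact ⟨v, Finset.mem_insert_self _ _, hvg⟩
        · obtain ⟨w, hw, hwg⟩ := hC g (Finset.mem_filter.mpr ⟨hg, hvg⟩)
          exact ⟨w, Finset.mem_insert_of_mem hw, hwg⟩
      · have := Finset.card_insert_le v C
        omega

theorem stmt0 {V : Type*} (r : ℕ) (p : V → Fin r) (E : Finset (Finset V))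
    (hpart : Rpartite r p E) (hint : Intersecting E) (hcard : E.card ≤ 2 * r - 4) :
    ∃ C : Finset V, IsCover E C ∧ C.card ≤ r - 2 := by
  exact cover_key (r - 2) E hint (by omega)
end

section
/- There is no 4-partite intersecting hypergraph H with exactly 5 edges and τ(H) ≥ 3; in other words, every 4-partite intersecting hypergraph with at most 5 edges has a cover of size at most 2. -/
lemma even_of_involution {α : Type*} [DecidableEq α] (s : Finset α) (τ : α → α)
    (hmem : ∀ a ∈ s, τ a ∈ s) (hne : ∀ a ∈ s, τ a ≠ a) (hinv : ∀ a ∈ s, τ (τ a) = a) :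
    Even s.card := by
  induction s using Finset.strongInduction with
  | _ s ih =>
    rcases s.eq_empty_or_nonempty with rfl | ⟨a, ha⟩
    · simp
    · have hτa := hmem a ha
      have hsub : (s.erase a).erase (τ a) ⊂ s := by
        refine Finset.ssubset_of_subset_of_ssubset ?_ (Finset.erase_ssubset ha)
        exact Finset.erase_subset _ _
      have hcard : s.card = ((s.erase a).erase (τ a)).card + 2 := by
        rw [Finset.card_erase_of_mem, Finset.card_erase_of_mem ha]
        · have : 1 ≤ s.card := Finset.card_pos.2 ⟨a, ha⟩
          have h2 : 2 ≤ s.card := by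
            have := Finset.one_lt_card.2 ⟨a, ha, τ a, hτa, (hne a ha).symm⟩
            omega
          omega
        · exact Finset.mem_erase.2 ⟨hne a ha, hτa⟩
      have := ih _ hsub (fun b hb => ?_) (fun b hb => hne b (by
          exact Finset.mem_of_mem_erase (Finset.mem_of_mem_erase hb)))
        (fun b hb => hinv b (Finset.mem_of_mem_erase (Finset.mem_of_mem_erase hb)))
      · obtain ⟨k, hk⟩ := this; exact ⟨k + 1, by omega⟩
      · obtain ⟨hb1, hb2, hb3⟩ : b ≠ τ a ∧ b ≠ a ∧ b ∈ s := by
          simp only [Finset.mem_erase] at hb; tauto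
        refine Finset.mem_erase.2 ⟨?_, Finset.mem_erase.2 ⟨?_, hmem b hb3⟩⟩
        · intro h; apply hb2; rw [← hinv a ha, ← h, hinv b hb3]
        · intro h; apply hb1; rw [← h, hinv b hb3]

lemma small_cover {V : Type*} [DecidableEq V] (E D : Finset (Finset V)) (hD : D ⊆ E)
    (hne : ∀ e ∈ E, e.Nonempty) (hint : Intersecting E) (h2 : D.card ≤ 2) :
    ∃ C : Finset V, IsCover D C ∧ C.card ≤ 1 := by
  interval_cases h : D.card
  · refine ⟨∅, ?_, by simp⟩
    rw [Finset.card_eq_zero] at h; subst h; intro e he; simp at he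
  · obtain ⟨e, rfl⟩ := Finset.card_eq_one.1 h
    obtain ⟨v, hv⟩ := hne e (hD (by simp))
    exact ⟨{v}, fun f hf => by simp at hf; subst hf; exact ⟨v, by simp, hv⟩, by simp⟩
  · obtain ⟨e, f, hef, rfl⟩ := Finset.card_eq_two.1 h
    obtain ⟨v, hv1, hv2⟩ := hint e (hD (by simp)) f (hD (by simp))
    refine ⟨{v}, fun g hg => ?_, by simp⟩
    simp only [Finset.mem_insert, Finset.mem_singleton] at hg
    rcases hg with rfl | rfl
    · exact ⟨v, by simp, hv1⟩
    · exact ⟨v, by simp, hv2⟩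

theorem stmt6 {V : Type*} (p : V → Fin 4) (E : Finset (Finset V))
    (hpart : Rpartite 4 p E) (hint : Intersecting E) (hcard : E.card ≤ 5) :
    ∃ C : Finset V, IsCover E C ∧ C.card ≤ 2 := by
  classical
  have hne : ∀ e ∈ E, e.Nonempty := fun e he => by
    obtain ⟨v, ⟨hv, _⟩, _⟩ := hpart e he 0
    exact ⟨v, hv⟩
  by_cases hd : ∃ v, 3 ≤ degree E v
  · obtain ⟨v, hv⟩ := hd
    have hsplit : degree E v + (E.filter (fun e => v ∉ e)).card = E.card := by
      simpa [degree] using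
        Finset.card_filter_add_card_filter_not (s := E) (p := fun e => v ∈ e)
    obtain ⟨C', hC1, hC2⟩ := small_cover E (E.filter (fun e => v ∉ e))
      (Finset.filter_subset _ _) hne hint (by omega)
    refine ⟨insert v C', ?_, ?_⟩
    · intro e he
      by_cases hv' : v ∈ e
      · exact ⟨v, Finset.mem_insert_self _ _, hv'⟩
      · obtain ⟨u, hu1, hu2⟩ := hC1 e (Finset.mem_filter.2 ⟨he, hv'⟩)
        exact ⟨u, Finset.mem_insert_of_mem hu1, hu2⟩
    · have := Finset.card_insert_le v C'
      omega
  · push_neg at hd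
    have hdeg : ∀ v, degree E v ≤ 2 := fun v => by have := hd v; omega
    by_cases h4 : E.card ≤ 4
    · obtain ⟨A, hA, hAcard⟩ := Finset.exists_subset_card_eq (s := E) (min_le_right 2 E.card)
      obtain ⟨CA, hCA1, hCA2⟩ := small_cover E A hA hne hint (by omega)
      obtain ⟨CB, hCB1, hCB2⟩ := small_cover E (E \ A) Finset.sdiff_subset hne hint
        (by rw [Finset.card_sdiff_of_subset hA, hAcard]; omega)
      refine ⟨CA ∪ CB, ?_, ?_⟩
      · intro e he
        by_cases hA' : e ∈ A
        · obtain ⟨u, hu1, hu2⟩ := hCA1 e hA'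
          exact ⟨u, Finset.mem_union_left _ hu1, hu2⟩
        · obtain ⟨u, hu1, hu2⟩ := hCB1 e (Finset.mem_sdiff.2 ⟨he, hA'⟩)
          exact ⟨u, Finset.mem_union_right _ hu1, hu2⟩
      · have := Finset.card_union_le CA CB
        omega
    · -- E.card = 5, all degrees ≤ 2 : contradiction
      exfalso
      have h5 : E.card = 5 := by omega
      obtain ⟨e0, he0⟩ : E.Nonempty := Finset.card_pos.1 (by omega)
      obtain ⟨v0, _⟩ := hne e0 he0
      haveI : Nonempty V := ⟨v0⟩
      -- symmetric choice of an intersection vertex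
      set g : Sym2 (Finset V) → V := fun q =>
        if h : ∃ v, ∀ e ∈ q, v ∈ e then h.choose else Classical.arbitrary V with hg
      set w : Finset V → Finset V → V := fun e f => g s(e, f) with hwdef
      have hwsymm : ∀ e f, w e f = w f e := by
        intro e f
        show g s(e, f) = g s(f, e)
        rw [Sym2.eq_swap]
      have hw : ∀ e ∈ E, ∀ f ∈ E, w e f ∈ e ∧ w e f ∈ f := by
        intro e he f hf
        obtain ⟨v, hv1, hv2⟩ := hint e he f hf
        have hex : ∃ v, ∀ x ∈ s(e, f), v ∈ x := ⟨v, by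
          intro x hx; rw [Sym2.mem_iff] at hx; rcases hx with rfl | rfl <;> assumption⟩
        have hspec := hex.choose_spec
        have hwe : w e f = hex.choose := by
          show g s(e, f) = _
          rw [hg]
          exact dif_pos hex
        rw [hwe]
        exact ⟨hspec e (by simp), hspec f (by simp)⟩
      -- no vertex in three distinct edges
      have hdeg3 : ∀ v : V, ∀ e ∈ E, ∀ f ∈ E, ∀ g' ∈ E, e ≠ f → e ≠ g' → f ≠ g' →
          v ∈ e → v ∈ f → v ∈ g' → False := by
        intro v e he f hf g' hg' hef heg hfg hve hvf hvg
        have hsub : ({e, f, g'} : Finset (Finset V)) ⊆ E.filter (fun x => v ∈ x) := by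
          intro x hx
          simp only [Finset.mem_insert, Finset.mem_singleton] at hx
          rcases hx with rfl | rfl | rfl <;> exact Finset.mem_filter.2 ⟨by assumption, by assumption⟩
        have hc : ({e, f, g'} : Finset (Finset V)).card = 3 := by
          rw [Finset.card_insert_of_notMem (by simp [hef, heg]),
            Finset.card_insert_of_notMem (by simp [hfg]), Finset.card_singleton]
        have := Finset.card_le_card hsub
        have := hdeg v
        simp only [degree] at this
        omega
      -- injectivity of f ↦ w e f on E.erase e
      have hinj : ∀ e ∈ E, ∀ f ∈ E.erase e, ∀ f' ∈ E.erase e, w e f = w e f' → f = f' := by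
        intro e he f hf f' hf' hww
        by_contra hff'
        obtain ⟨hfe, hfE⟩ := Finset.mem_erase.1 hf
        obtain ⟨hf'e, hf'E⟩ := Finset.mem_erase.1 hf'
        obtain ⟨h1, h2⟩ := hw e he f hfE
        obtain ⟨_, h4⟩ := hw e he f' hf'E
        exact hdeg3 (w e f) e he f hfE f' hf'E (Ne.symm hfe) (Ne.symm hf'e) hff' h1 h2
          (hww ▸ h4)
      -- uniqueness of classes within an edge
      have hclassuniq : ∀ e ∈ E, ∀ u ∈ e, ∀ v ∈ e, p u = p v → u = v := by
        intro e he u hu v hv hpuv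
        obtain ⟨x, _, hx⟩ := hpart e he (p u)
        rw [hx u ⟨hu, rfl⟩, hx v ⟨hv, hpuv.symm⟩]
      -- surjectivity of f ↦ p (w e f) onto Fin 4
      have hsurj : ∀ e ∈ E, ∃ f ∈ E.erase e, p (w e f) = 0 := by
        intro e he
        have hcardE : (E.erase e).card = 4 := by rw [Finset.card_erase_of_mem he, h5]
        have hinjOn : Set.InjOn (fun f => p (w e f)) (E.erase e) := by
          intro f hf f' hf' h
          simp only [Finset.coe_mem, Finset.mem_coe] at hf hf'
          refine hinj e he f hf f' hf' ?_
          exact hclassuniq e he _ (hw e he f (Finset.mem_of_mem_erase hf)).1 _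
            (hw e he f' (Finset.mem_of_mem_erase hf')).1 h
        have himg : ((E.erase e).image (fun f => p (w e f))).card = 4 := by
          rw [Finset.card_image_of_injOn hinjOn, hcardE]
        have huniv : (E.erase e).image (fun f => p (w e f)) = Finset.univ :=
          Finset.eq_of_subset_of_card_le (Finset.subset_univ _) (by simp [himg])
        have : (0 : Fin 4) ∈ (E.erase e).image (fun f => p (w e f)) := by
          rw [huniv]; exact Finset.mem_univ _
        obtain ⟨f, hf, hpf⟩ := Finset.mem_image.1 this
        exact ⟨f, hf, hpf⟩
      choose σ hσ1 hσ2 using hsurj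
      set τ : Finset V → Finset V := fun e => if h : e ∈ E then σ e h else e with hτ
      have hτval : ∀ e (he : e ∈ E), τ e = σ e he := fun e he => by
        simp only [hτ, dif_pos he]
      have hτmem : ∀ e ∈ E, τ e ∈ E := fun e he => by
        rw [hτval e he]; exact Finset.mem_of_mem_erase (hσ1 e he)
      have hτne : ∀ e ∈ E, τ e ≠ e := fun e he => by
        rw [hτval e he]; exact (Finset.mem_erase.1 (hσ1 e he)).1
      have hτinv : ∀ e ∈ E, τ (τ e) = e := by
        intro e he
        rw [hτval e he]
        set f := σ e he with hf
        have hfE : f ∈ E := Finset.mem_of_mem_erase (hσ1 e he)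
        have hfe : f ≠ e := (Finset.mem_erase.1 (hσ1 e he)).1
        rw [hτval f hfE]
        -- both σ f hfE and e lie in E.erase f with class 0
        refine hinj f hfE _ (hσ1 f hfE) e (Finset.mem_erase.2 ⟨Ne.symm hfe, he⟩) ?_
        have h1 : p (w f (σ f hfE)) = 0 := hσ2 f hfE
        have h2 : p (w f e) = 0 := by rw [hwsymm f e]; exact hσ2 e he
        refine hclassuniq f hfE _ (hw f hfE _ (Finset.mem_of_mem_erase (hσ1 f hfE))).1 _
          (hw f hfE e he).1 ?_
        rw [h1, h2]
      have heven := even_of_involution E τ hτmem hτne hτinv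
      rw [h5] at heven
      exact (by decide : ¬ Even 5) heven
end

section
/- f(4) = 6, where f(r) is the minimum number of edges in an r-partite intersecting hypergraph with cover number at least r-1. -/
/-- There is an `r`-partite intersecting hypergraph with `m` edges and cover number `≥ r-1`. -/
def HasConfig (r m : ℕ) : Prop :=
  ∃ (V : Type) (p : V → Fin r) (E : Finset (Finset V)),
    Rpartite r p E ∧ Intersecting E ∧ E.card = m ∧
    ∀ C : Finset V, IsCover E C → r - 1 ≤ C.card

/-- `f r`: minimum number of edges of an `r`-partite intersecting hypergraph
with cover number at least `r - 1`. -/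
noncomputable def f (r : ℕ) : ℕ := sInf {m | HasConfig r m}

-- auxiliary: intersecting families of ≤ 2k edges have covers of size ≤ k
lemma cover_of_card_le {V : Type} (k : ℕ) :
    ∀ E : Finset (Finset V), Intersecting E → E.card ≤ 2 * k →
      ∃ C : Finset V, IsCover E C ∧ C.card ≤ k := by
  classical
  induction k with
  | zero =>
    intro E _ h
    have hE : E = ∅ := Finset.card_eq_zero.mp (Nat.le_antisymm (by simpa using h) (Nat.zero_le _))
    exact ⟨∅, by simp [hE, IsCover], by simp⟩
  | succ k ih =>
    intro E hint hcard
    rcases E.eq_empty_or_nonempty with rfl | ⟨e, he⟩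
    · exact ⟨∅, by simp [IsCover], by simp⟩
    rcases (E.erase e).eq_empty_or_nonempty with h0 | ⟨g, hg⟩
    · obtain ⟨v, hv, _⟩ := hint e he e he
      refine ⟨{v}, ?_, by simp⟩
      intro a ha
      have hae : a = e := by
        by_contra hne
        have : a ∈ E.erase e := Finset.mem_erase.mpr ⟨hne, ha⟩
        simp [h0] at this
      exact ⟨v, Finset.mem_singleton_self v, hae ▸ hv⟩
    · have hgE : g ∈ E := Finset.mem_of_mem_erase hg
      have hge : g ≠ e := Finset.ne_of_mem_erase hg
      obtain ⟨v, hve, hvg⟩ := hint e he g hgE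
      set E' := (E.erase e).erase g with hE'
      have hsub : E' ⊆ E := fun x hx =>
        Finset.mem_of_mem_erase (Finset.mem_of_mem_erase hx)
      have hint' : Intersecting E' := fun a ha b hb => hint a (hsub ha) b (hsub hb)
      have hc' : E'.card ≤ 2 * k := by
        have h1 : (E.erase e).card = E.card - 1 := Finset.card_erase_of_mem he
        have h2 : E'.card = (E.erase e).card - 1 := Finset.card_erase_of_mem hg
        omega
      obtain ⟨C', hC', hC'card⟩ := ih E' hint' hc'
      refine ⟨insert v C', ?_, ?_⟩
      · intro a ha
        by_cases hae : a = e
        · exact ⟨v, Finset.mem_insert_self v C', hae ▸ hve⟩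
        by_cases hag : a = g
        · exact ⟨v, Finset.mem_insert_self v C', hag ▸ hvg⟩
        · have haE' : a ∈ E' := Finset.mem_erase.mpr ⟨hag, Finset.mem_erase.mpr ⟨hae, ha⟩⟩
          obtain ⟨u, huC, hua⟩ := hC' a haE'
          exact ⟨u, Finset.mem_insert_of_mem huC, hua⟩
      · calc (insert v C').card ≤ C'.card + 1 := Finset.card_insert_le v C'
          _ ≤ k + 1 := by omega

lemma not_hasconfig {m : ℕ} (hm : m ≤ 5) : ¬ HasConfig 4 m := by
  classical
  rintro ⟨V, p, E, hrp, hint, hcard, hcov⟩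
  by_cases h4 : E.card ≤ 4
  · obtain ⟨C, hC, hle⟩ := cover_of_card_le 2 E hint (by omega)
    have := hcov C hC
    omega
  have h5 : E.card = 5 := by omega
  by_cases hd : ∃ v, 3 ≤ degree E v
  · -- a vertex of degree ≥ 3 : cover by it plus one more vertex
    obtain ⟨v, hv⟩ := hd
    set E' := E.filter (fun e => ¬ v ∈ e) with hE'
    have hE'card : E'.card ≤ 2 := by
      have hsplit : degree E v + E'.card = E.card :=
        Finset.card_filter_add_card_filter_not (s := E) (p := fun e => v ∈ e)
      omega
    have hsub : E' ⊆ E := Finset.filter_subset _ _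
    have hint' : Intersecting E' := fun a ha b hb => hint a (hsub ha) b (hsub hb)
    obtain ⟨C', hC', hC'card⟩ := cover_of_card_le 1 E' hint' (by omega)
    have hCov : IsCover E (insert v C') := by
      intro a ha
      by_cases hva : v ∈ a
      · exact ⟨v, Finset.mem_insert_self _ _, hva⟩
      · have : a ∈ E' := Finset.mem_filter.mpr ⟨ha, hva⟩
        obtain ⟨u, huC, hua⟩ := hC' a this
        exact ⟨u, Finset.mem_insert_of_mem huC, hua⟩
    have h1 := hcov _ hCov
    have h2 : (insert v C').card ≤ C'.card + 1 := Finset.card_insert_le v C'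
    omega
  · -- all degrees ≤ 2 : parity contradiction
    push_neg at hd
    have hdeg : ∀ v, degree E v ≤ 2 := fun v => by have := hd v; omega
    -- V is nonempty
    have hEne : E.Nonempty := Finset.card_pos.mp (by omega)
    obtain ⟨e₀, he₀⟩ := hEne
    obtain ⟨v₀, _, _⟩ := hrp e₀ he₀ 0
    -- canonical element of a nonempty finset
    let w' : Finset V → V := fun s => if h : s.Nonempty then h.choose else v₀
    have hw'mem : ∀ s : Finset V, s.Nonempty → w' s ∈ s := by
      intro s h
      simp only [w', dif_pos h]
      exact h.choose_spec
    have hinter : ∀ e ∈ E, ∀ f ∈ E, (e ∩ f).Nonempty := by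
      intro e he f hf
      obtain ⟨v, hv1, hv2⟩ := hint e he f hf
      exact ⟨v, Finset.mem_inter.mpr ⟨hv1, hv2⟩⟩
    have hwmem : ∀ e ∈ E, ∀ f ∈ E, w' (e ∩ f) ∈ e ∧ w' (e ∩ f) ∈ f := by
      intro e he f hf
      have := hw'mem _ (hinter e he f hf)
      exact Finset.mem_inter.mp this
    -- no vertex belongs to three distinct edges
    have hdeg3 : ∀ v : V, ∀ e ∈ E, ∀ g ∈ E, ∀ h ∈ E, e ≠ g → e ≠ h → g ≠ h →
        v ∈ e → v ∈ g → v ∈ h → False := by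
      intro v e he g hg h hh heg heh hgh hve hvg hvh
      have hsub : ({e, g, h} : Finset (Finset V)) ⊆ E.filter (fun x => v ∈ x) := by
        intro x hx
        simp only [Finset.mem_insert, Finset.mem_singleton] at hx
        rcases hx with rfl | rfl | rfl <;> simp [Finset.mem_filter, he, hg, hh, hve, hvg, hvh]
      have h3 : ({e, g, h} : Finset (Finset V)).card = 3 := by
        rw [Finset.card_insert_of_notMem (by simp [heg, heh]),
          Finset.card_insert_of_notMem (by simp [hgh]), Finset.card_singleton]
      have hle := Finset.card_le_card hsub
      have := hdeg v
      unfold degree at this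
      omega
    -- within an edge, vertices are determined by their class
    have hclass : ∀ e ∈ E, ∀ a ∈ e, ∀ b ∈ e, p a = p b → a = b := by
      intro e he a ha b hb hab
      obtain ⟨v, _, huniq⟩ := hrp e he (p a)
      have h1 := huniq a ⟨ha, rfl⟩
      have h2 := huniq b ⟨hb, hab.symm⟩
      rw [h1, h2]
    -- the classes of shared vertices around a fixed edge are all distinct
    have key_inj : ∀ e ∈ E, ∀ g ∈ E.erase e, ∀ h ∈ E.erase e,
        p (w' (e ∩ g)) = p (w' (e ∩ h)) → g = h := by
      intro e he g hg h hh hpp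
      by_contra hgh
      have hgE := Finset.mem_of_mem_erase hg
      have hhE := Finset.mem_of_mem_erase hh
      have hmg := hwmem e he g hgE
      have hmh := hwmem e he h hhE
      have heq : w' (e ∩ g) = w' (e ∩ h) := hclass e he _ hmg.1 _ hmh.1 hpp
      exact hdeg3 (w' (e ∩ g)) e he g hgE h hhE
        (Finset.ne_of_mem_erase hg).symm (Finset.ne_of_mem_erase hh).symm hgh
        hmg.1 hmg.2 (heq ▸ hmh.2)
    -- every class is hit by a shared vertex around each edge
    have key_surj : ∀ e ∈ E, ∀ i : Fin 4, ∃ g ∈ E.erase e, p (w' (e ∩ g)) = i := by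
      intro e he i
      have hce : (E.erase e).card = 4 := by
        rw [Finset.card_erase_of_mem he, h5]
      have himg : (E.erase e).image (fun g => p (w' (e ∩ g))) = Finset.univ := by
        apply Finset.eq_univ_of_card
        rw [Finset.card_image_of_injOn (fun a ha b hb => key_inj e he a ha b hb), hce]
        simp
      have : i ∈ (E.erase e).image (fun g => p (w' (e ∩ g))) := himg ▸ Finset.mem_univ i
      obtain ⟨g, hg, hgi⟩ := Finset.mem_image.mp this
      exact ⟨g, hg, hgi⟩
    -- the "partner in class 0" involution
    let σ : ∀ a ∈ E, Finset V := fun a ha => (key_surj a ha 0).choose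
    have hσ : ∀ a (ha : a ∈ E), σ a ha ∈ E.erase a ∧ p (w' (a ∩ σ a ha)) = 0 := by
      intro a ha
      obtain ⟨h1, h2⟩ := (key_surj a ha 0).choose_spec
      exact ⟨h1, h2⟩
    have hσmem : ∀ a (ha : a ∈ E), σ a ha ∈ E :=
      fun a ha => Finset.mem_of_mem_erase (hσ a ha).1
    have hσne : ∀ a (ha : a ∈ E), σ a ha ≠ a :=
      fun a ha => Finset.ne_of_mem_erase (hσ a ha).1
    have hσinv : ∀ a (ha : a ∈ E), σ (σ a ha) (hσmem a ha) = a := by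
      intro a ha
      set b := σ a ha with hb
      have hbE := hσmem a ha
      have hspec := hσ b hbE
      apply key_inj b hbE _ hspec.1 a
        (Finset.mem_erase.mpr ⟨fun h => hσne a ha h.symm, ha⟩)
      rw [hspec.2, Finset.inter_comm, (hσ a ha).2]
    have hprod : ∏ _x ∈ E, (-1 : ℤ) = 1 :=
      Finset.prod_involution σ (by intro a ha; norm_num)
        (fun a ha _ => hσne a ha) hσmem hσinv
    rw [Finset.prod_const, h5] at hprod
    norm_num at hprod

lemma subset_pair {α : Type} [DecidableEq α] (x : α) (C : Finset α) (h : C.card ≤ 2) :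
    ∃ v w, C ⊆ ({v, w} : Finset α) := by
  interval_cases h' : C.card
  · exact ⟨x, x, by simp [Finset.card_eq_zero.mp h']⟩
  · obtain ⟨a, rfl⟩ := Finset.card_eq_one.mp h'
    exact ⟨a, a, by simp⟩
  · obtain ⟨a, b, _, rfl⟩ := Finset.card_eq_two.mp h'
    exact ⟨a, b, subset_rfl⟩

def myp : Fin 12 → Fin 4 := fun v => ⟨v.val / 3, by have := v.isLt; omega⟩

def myE : Finset (Finset (Fin 12)) :=
  {{0,4,7,11},{0,5,8,10},{1,3,7,10},{1,4,8,9},{1,5,6,11},{2,3,8,11}}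

lemma hasconfig6 : HasConfig 4 6 := by
  refine ⟨Fin 12, myp, myE, ?_, ?_, ?_, ?_⟩
  · intro e he i
    fin_cases he <;> fin_cases i <;>
      first
      | exact ⟨0, by decide, by decide⟩ | exact ⟨1, by decide, by decide⟩
      | exact ⟨2, by decide, by decide⟩ | exact ⟨3, by decide, by decide⟩
      | exact ⟨4, by decide, by decide⟩ | exact ⟨5, by decide, by decide⟩
      | exact ⟨6, by decide, by decide⟩ | exact ⟨7, by decide, by decide⟩
      | exact ⟨8, by decide, by decide⟩ | exact ⟨9, by decide, by decide⟩
      | exact ⟨10, by decide, by decide⟩ | exact ⟨11, by decide, by decide⟩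
  · intro e he g hg
    fin_cases he <;> fin_cases hg <;> decide
  · decide
  · intro C hC
    by_contra hlt
    push_neg at hlt
    obtain ⟨v, w, hsub⟩ := subset_pair (0 : Fin 12) C (by omega)
    have key : ∀ v w : Fin 12, ∃ e ∈ myE, v ∉ e ∧ w ∉ e := by
      intro v w
      fin_cases v <;> fin_cases w <;> decide
    obtain ⟨e, he, hv, hw⟩ := key v w
    obtain ⟨u, huC, hue⟩ := hC e he
    have hu := hsub huC
    simp only [Finset.mem_insert, Finset.mem_singleton] at hu
    rcases hu with rfl | rfl
    · exact hv hue
    · exact hw hue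

theorem stmt8 : f 4 = 6 := by
  have h6 : HasConfig 4 6 := hasconfig6
  unfold f
  apply le_antisymm
  · exact Nat.sInf_le h6
  · exact le_csInf ⟨6, h6⟩ fun m hm => by
      by_contra h
      push_neg at h
      exact not_hasconfig (by omega) hm
end

section
/- There is no 5-partite intersecting hypergraph with exactly 8 edges and cover number at least 4. -/
theorem stmt9 {V : Type*} (p : V → Fin 5) (E : Finset (Finset V))
    (hpart : Rpartite 5 p E) (hint : Intersecting E) (hcard : E.card = 8) :
    ∃ C : Finset V, IsCover E C ∧ C.card ≤ 3 := by
  classical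
  by_contra hC
  push_neg at hC
  -- hC : ∀ C, IsCover E C → 3 < C.card
  -- Pairing lemma: 2k intersecting edges can be covered by k vertices.
  have pair : ∀ (k : ℕ) (F : Finset (Finset V)), F ⊆ E → F.card ≤ 2 * k →
      ∃ C : Finset V, (∀ e ∈ F, ∃ v ∈ C, v ∈ e) ∧ C.card ≤ k := by
    intro k
    induction k with
    | zero =>
      intro F hFE hc
      have hF : F = ∅ := Finset.card_eq_zero.mp (by omega)
      exact ⟨∅, by simp [hF], by simp⟩
    | succ k ih =>
      intro F hFE hc
      rcases F.eq_empty_or_nonempty with rfl | ⟨e, he⟩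
      · exact ⟨∅, by simp, by simp⟩
      rcases (F.erase e).eq_empty_or_nonempty with h1 | ⟨f, hf⟩
      · obtain ⟨v, hv, -⟩ := hint e (hFE he) e (hFE he)
        refine ⟨{v}, ?_, by simp⟩
        intro g hg
        have hge : g = e := by
          by_contra hne
          exact absurd (Finset.mem_erase.mpr ⟨hne, hg⟩) (by simp [h1])
        exact ⟨v, Finset.mem_singleton_self v, hge ▸ hv⟩
      · have hfF : f ∈ F := Finset.mem_of_mem_erase hf
        have hfe : f ≠ e := Finset.ne_of_mem_erase hf
        obtain ⟨v, hv1, hv2⟩ := hint e (hFE he) f (hFE hfF)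
        have hF'sub : (F.erase e).erase f ⊆ E :=
          fun g hg => hFE (Finset.mem_of_mem_erase (Finset.mem_of_mem_erase hg))
        have hF'card : ((F.erase e).erase f).card ≤ 2 * k := by
          have h1 := Finset.card_erase_of_mem hf
          have h2 := Finset.card_erase_of_mem he
          have h3 : 1 ≤ F.card := Finset.card_pos.mpr ⟨e, he⟩
          have h4 : 1 ≤ (F.erase e).card := Finset.card_pos.mpr ⟨f, hf⟩
          omega
        obtain ⟨C, hCcov, hCcard⟩ := ih ((F.erase e).erase f) hF'sub hF'card
        refine ⟨insert v C, ?_, ?_⟩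
        · intro g hg
          by_cases hge : g = e
          · exact ⟨v, Finset.mem_insert_self v C, hge ▸ hv1⟩
          by_cases hgf : g = f
          · exact ⟨v, Finset.mem_insert_self v C, hgf ▸ hv2⟩
          · obtain ⟨w, hw, hwg⟩ := hCcov g
              (Finset.mem_erase.mpr ⟨hgf, Finset.mem_erase.mpr ⟨hge, hg⟩⟩)
            exact ⟨w, Finset.mem_insert_of_mem hw, hwg⟩
        · calc (insert v C).card ≤ C.card + 1 := Finset.card_insert_le v C
            _ ≤ k + 1 := by omega
  -- Every vertex has degree at most 3.
  have hdeg3 : ∀ v : V, (E.filter (fun e => v ∈ e)).card ≤ 3 := by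
    intro v
    by_contra h
    push_neg at h
    have hsplit := Finset.card_filter_add_card_filter_not
      (s := E) (p := fun e => v ∈ e)
    have hFcard : (E.filter (fun e => ¬ v ∈ e)).card ≤ 2 * 2 := by omega
    obtain ⟨C, hcov, hcc⟩ := pair 2 _ (Finset.filter_subset _ E) hFcard
    have hcover : IsCover E (insert v C) := by
      intro e heE
      by_cases hve : v ∈ e
      · exact ⟨v, Finset.mem_insert_self v C, hve⟩
      · obtain ⟨w, hw, hwe⟩ := hcov e (Finset.mem_filter.mpr ⟨heE, hve⟩)
        exact ⟨w, Finset.mem_insert_of_mem hw, hwe⟩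
    have := hC (insert v C) hcover
    have := Finset.card_insert_le v C
    omega
  -- In each class, at most one vertex has degree ≥ 3.
  have honethree : ∀ u w : V, p u = p w → u ≠ w →
      (E.filter (fun e => u ∈ e)).card ≤ 2 ∨ (E.filter (fun e => w ∈ e)).card ≤ 2 := by
    intro u w hpw hne
    by_contra h
    push_neg at h
    obtain ⟨h3u, h3w⟩ := h
    have hdisj : Disjoint (E.filter (fun e => u ∈ e)) (E.filter (fun e => w ∈ e)) := by
      rw [Finset.disjoint_left]
      intro e heu hew
      obtain ⟨heE, hue⟩ := Finset.mem_filter.mp heu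
      obtain ⟨-, hwe⟩ := Finset.mem_filter.mp hew
      obtain ⟨v0, -, huniq⟩ := hpart e heE (p u)
      exact hne ((huniq u ⟨hue, rfl⟩).trans (huniq w ⟨hwe, hpw.symm⟩).symm)
    have hunion : (E.filter (fun e => u ∈ e ∨ w ∈ e)).card
        = (E.filter (fun e => u ∈ e)).card + (E.filter (fun e => w ∈ e)).card := by
      rw [Finset.filter_or, Finset.card_union_of_disjoint hdisj]
    have hsplit := Finset.card_filter_add_card_filter_not
      (s := E) (p := fun e => u ∈ e ∨ w ∈ e)
    have hFcard : (E.filter (fun e => ¬ (u ∈ e ∨ w ∈ e))).card ≤ 2 * 1 := by omega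
    obtain ⟨C, hcov, hcc⟩ := pair 1 _ (Finset.filter_subset _ E) hFcard
    have hcover : IsCover E (insert u (insert w C)) := by
      intro e heE
      by_cases hue : u ∈ e
      · exact ⟨u, Finset.mem_insert_self _ _, hue⟩
      by_cases hwe : w ∈ e
      · exact ⟨w, Finset.mem_insert_of_mem (Finset.mem_insert_self _ _), hwe⟩
      · obtain ⟨x, hx, hxe⟩ := hcov e (Finset.mem_filter.mpr ⟨heE, by tauto⟩)
        exact ⟨x, Finset.mem_insert_of_mem (Finset.mem_insert_of_mem hx), hxe⟩
    have h1 := hC _ hcover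
    have h2 := Finset.card_insert_le u (insert w C)
    have h3 := Finset.card_insert_le w C
    omega
  -- The counting argument.
  set W : Finset V := E.biUnion id with hW
  set A : Fin 5 → Finset (Finset V × Finset V) :=
    fun i => E.offDiag.filter (fun q => ∃ v, v ∈ q.1 ∧ v ∈ q.2 ∧ p v = i) with hA
  -- Lower bound: all 56 ordered pairs of distinct edges agree somewhere.
  have hlow : E.offDiag.card ≤ ∑ i : Fin 5, (A i).card := by
    calc E.offDiag.card ≤ (Finset.univ.biUnion A).card := by
          apply Finset.card_le_card
          intro q hq
          obtain ⟨h1, h2, h3⟩ := Finset.mem_offDiag.mp hq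
          obtain ⟨v, hv1, hv2⟩ := hint q.1 h1 q.2 h2
          exact Finset.mem_biUnion.mpr ⟨p v, Finset.mem_univ _,
            Finset.mem_filter.mpr ⟨hq, ⟨v, hv1, hv2, rfl⟩⟩⟩
      _ ≤ ∑ i : Fin 5, (A i).card := Finset.card_biUnion_le
  have hoffcard : E.offDiag.card = 56 := by
    rw [Finset.offDiag_card, hcard]
  -- Upper bound: each coordinate carries at most 11 ordered agreeing pairs.
  have hup : ∀ i : Fin 5, (A i).card ≤ 11 := by
    intro i
    set Vi : Finset V := W.filter (fun v => p v = i) with hVi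
    -- each edge contains exactly one vertex of Vi
    have hone : ∀ e ∈ E, (Vi.filter (fun v => v ∈ e)).card = 1 := by
      intro e heE
      obtain ⟨v0, ⟨hv0e, hv0p⟩, huniq⟩ := hpart e heE i
      rw [Finset.card_eq_one]
      refine ⟨v0, ?_⟩
      ext u
      simp only [Finset.mem_filter, Finset.mem_singleton, hVi]
      constructor
      · rintro ⟨⟨-, hup'⟩, hue⟩
        exact huniq u ⟨hue, hup'⟩
      · rintro rfl
        exact ⟨⟨Finset.mem_biUnion.mpr ⟨e, heE, hv0e⟩, hv0p⟩, hv0e⟩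
    -- sum of degrees over Vi is 8
    have hsum8 : ∑ v ∈ Vi, (E.filter (fun e => v ∈ e)).card = 8 := by
      calc ∑ v ∈ Vi, (E.filter (fun e => v ∈ e)).card
          = ∑ v ∈ Vi, ∑ e ∈ E, if v ∈ e then 1 else 0 := by
            refine Finset.sum_congr rfl fun v _ => ?_
            rw [Finset.card_filter]
        _ = ∑ e ∈ E, ∑ v ∈ Vi, if v ∈ e then 1 else 0 := Finset.sum_comm
        _ = ∑ e ∈ E, (Vi.filter (fun v => v ∈ e)).card := by
            refine Finset.sum_congr rfl fun e _ => ?_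
            rw [Finset.card_filter]
        _ = ∑ e ∈ E, 1 := Finset.sum_congr rfl hone
        _ = 8 := by rw [Finset.sum_const, hcard]; rfl
    -- A i is contained in the union of off-diagonals of edge-sets of vertices of Vi
    have hsub : A i ⊆ Vi.biUnion (fun v => (E.filter (fun e => v ∈ e)).offDiag) := by
      intro q hq
      obtain ⟨hqod, v, hv1, hv2, hvp⟩ := Finset.mem_filter.mp hq
      obtain ⟨h1, h2, h3⟩ := Finset.mem_offDiag.mp hqod
      refine Finset.mem_biUnion.mpr ⟨v, ?_, ?_⟩
      · exact Finset.mem_filter.mpr ⟨Finset.mem_biUnion.mpr ⟨q.1, h1, hv1⟩, hvp⟩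
      · exact Finset.mem_offDiag.mpr ⟨Finset.mem_filter.mpr ⟨h1, hv1⟩,
          Finset.mem_filter.mpr ⟨h2, hv2⟩, h3⟩
    have hcardA : (A i).card ≤
        ∑ v ∈ Vi, (E.filter (fun e => v ∈ e)).card * ((E.filter (fun e => v ∈ e)).card - 1) := by
      calc (A i).card ≤ (Vi.biUnion (fun v => (E.filter (fun e => v ∈ e)).offDiag)).card :=
            Finset.card_le_card hsub
        _ ≤ ∑ v ∈ Vi, (E.filter (fun e => v ∈ e)).offDiag.card := Finset.card_biUnion_le
        _ = _ := Finset.sum_congr rfl fun v _ => by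
              rw [Finset.offDiag_card]
              cases (E.filter (fun e => v ∈ e)).card with
              | zero => rfl
              | succ n => rw [Nat.succ_sub_one, Nat.mul_succ, Nat.add_sub_cancel]
    -- arithmetic: the sum of d(d-1) is at most 11
    have harith : ∑ v ∈ Vi, (E.filter (fun e => v ∈ e)).card *
        ((E.filter (fun e => v ∈ e)).card - 1) ≤ 11 := by
      by_cases hex : ∃ v0 ∈ Vi, (E.filter (fun e => v0 ∈ e)).card = 3
      · obtain ⟨v0, hv0, hd0⟩ := hex
        have hsplit := Finset.add_sum_erase Vi
          (fun v => (E.filter (fun e => v ∈ e)).card *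
            ((E.filter (fun e => v ∈ e)).card - 1)) hv0
        have hsplit8 := Finset.add_sum_erase Vi
          (fun v => (E.filter (fun e => v ∈ e)).card) hv0
        have hrest : ∑ v ∈ Vi.erase v0, (E.filter (fun e => v ∈ e)).card *
            ((E.filter (fun e => v ∈ e)).card - 1)
            ≤ ∑ v ∈ Vi.erase v0, (E.filter (fun e => v ∈ e)).card := by
          refine Finset.sum_le_sum fun v hv => ?_
          have hvVi : v ∈ Vi := Finset.mem_of_mem_erase hv
          have hvne : v ≠ v0 := Finset.ne_of_mem_erase hv
          have hpv : p v = i := (Finset.mem_filter.mp hvVi).2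
          have hpv0 : p v0 = i := (Finset.mem_filter.mp hv0).2
          have hd2 : (E.filter (fun e => v ∈ e)).card ≤ 2 := by
            rcases honethree v v0 (hpv.trans hpv0.symm) hvne with h | h
            · exact h
            · omega
          interval_cases h : (E.filter (fun e => v ∈ e)).card <;> omega
        beta_reduce at hsplit hsplit8
        rw [hd0] at hsplit hsplit8
        omega
      · push_neg at hex
        have : ∑ v ∈ Vi, (E.filter (fun e => v ∈ e)).card *
            ((E.filter (fun e => v ∈ e)).card - 1)
            ≤ ∑ v ∈ Vi, (E.filter (fun e => v ∈ e)).card := by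
          refine Finset.sum_le_sum fun v hv => ?_
          have hd2 : (E.filter (fun e => v ∈ e)).card ≤ 2 := by
            have := hdeg3 v
            have := hex v hv
            omega
          interval_cases h : (E.filter (fun e => v ∈ e)).card <;> omega
        omega
    omega
  have hfinal : ∑ i : Fin 5, (A i).card ≤ 55 := by
    calc ∑ i : Fin 5, (A i).card ≤ ∑ _i : Fin 5, 11 := Finset.sum_le_sum fun i _ => hup i
      _ = 55 := by simp
  omega
end

section
/- Let H be a 5-partite intersecting hypergraph with 8 edges and τ(H) ≥ 4. Then no vertex of H has degree 4 or more. -/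
lemma two_cover {V : Type*} [DecidableEq V] (F : Finset (Finset V))
    (h : ∀ e ∈ F, ∀ f ∈ F, ∃ x, x ∈ e ∧ x ∈ f) (hc : F.card ≤ 2) (hne : F.Nonempty) :
    ∃ u, ∀ e ∈ F, u ∈ e := by
  obtain ⟨e, he⟩ := hne
  by_cases hf : ∃ f ∈ F, f ≠ e
  · obtain ⟨f, hfF, hfe⟩ := hf
    obtain ⟨x, hxe, hxf⟩ := h e he f hfF
    have heq : ({e, f} : Finset (Finset V)) = F := by
      apply Finset.eq_of_subset_of_card_le
      · intro g hg
        rcases Finset.mem_insert.mp hg with rfl | hg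
        · exact he
        · exact Finset.mem_singleton.mp hg ▸ hfF
      · have : ({e, f} : Finset (Finset V)).card = 2 := by
          rw [Finset.card_insert_of_notMem (by simp only [Finset.mem_singleton]; exact fun h => hfe h.symm),
            Finset.card_singleton]
        omega
    refine ⟨x, fun g hg => ?_⟩
    rw [← heq] at hg
    rcases Finset.mem_insert.mp hg with rfl | hg
    · exact hxe
    · exact Finset.mem_singleton.mp hg ▸ hxf
  · push_neg at hf
    obtain ⟨x, hx, -⟩ := h e he e he
    exact ⟨x, fun g hg => (hf g hg) ▸ hx⟩

theorem stmt10 {V : Type*} [DecidableEq V] (p : V → Fin 5) (E : Finset (Finset V))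
    (hpart : Rpartite 5 p E) (hint : Intersecting E) (hcard : E.card = 8)
    (htau : ∀ C : Finset V, IsCover E C → 4 ≤ C.card) :
    ∀ v : V, degree E v ≤ 3 := by
  intro v
  by_contra hdeg
  push_neg at hdeg
  set F := E.filter (fun e => v ∉ e) with hF
  have hFcard : F.card ≤ 4 := by
    have h1 : (E.filter (fun e => v ∈ e)).card + F.card = E.card := by
      rw [hF]
      exact Finset.card_filter_add_card_filter_not (p := fun e => v ∈ e)
    have h2 : 3 < (E.filter (fun e => v ∈ e)).card := hdeg
    omega
  have hFmem : ∀ e ∈ F, e ∈ E ∧ v ∉ e := fun e he => Finset.mem_filter.mp he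
  have hFint : ∀ e ∈ F, ∀ f ∈ F, ∃ x, x ∈ e ∧ x ∈ f :=
    fun e he f hf => hint e (hFmem e he).1 f (hFmem f hf).1
  have key : ∃ C : Finset V, IsCover E C ∧ C.card ≤ 3 := by
    rcases Finset.eq_empty_or_nonempty F with hFe | ⟨e1, he1⟩
    · refine ⟨{v}, fun e heE => ⟨v, Finset.mem_singleton_self v, ?_⟩, by simp⟩
      by_contra hv
      have : e ∈ F := Finset.mem_filter.mpr ⟨heE, hv⟩
      simp [hFe] at this
    · rcases Finset.eq_empty_or_nonempty (F.erase e1) with hG1 | ⟨e2, he2⟩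
      · -- F = {e1}
        obtain ⟨u, hu, -⟩ := hFint e1 he1 e1 he1
        refine ⟨{v, u}, fun e heE => ?_, ?_⟩
        · by_cases hv : v ∈ e
          · exact ⟨v, by simp, hv⟩
          · have heF : e ∈ F := Finset.mem_filter.mpr ⟨heE, hv⟩
            have : e = e1 := by
              by_contra hne
              have : e ∈ F.erase e1 := Finset.mem_erase.mpr ⟨hne, heF⟩
              simp [hG1] at this
            exact ⟨u, by simp, this ▸ hu⟩
        · exact (Finset.card_insert_le _ _).trans (by simp)
      · have he2F : e2 ∈ F := Finset.mem_of_mem_erase he2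
        have hne12 : e2 ≠ e1 := (Finset.mem_erase.mp he2).1
        obtain ⟨u, hu1, hu2⟩ := hFint e1 he1 e2 he2F
        set G := (F.erase e1).erase e2 with hGdef
        have hGsub : ∀ g ∈ G, g ∈ F := fun g hg =>
          Finset.mem_of_mem_erase (Finset.mem_of_mem_erase hg)
        have hGcard : G.card ≤ 2 := by
          have h1 : (F.erase e1).card + 1 = F.card :=
            Finset.card_erase_add_one he1
          have h2 : G.card + 1 = (F.erase e1).card :=
            Finset.card_erase_add_one he2
          omega
        have hGint : ∀ e ∈ G, ∀ f ∈ G, ∃ x, x ∈ e ∧ x ∈ f :=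
          fun e he f hf => hFint e (hGsub e he) f (hGsub f hf)
        have cover2 : ∃ w, ∀ g ∈ G, w ∈ g := by
          rcases Finset.eq_empty_or_nonempty G with hGe | hGne
          · exact ⟨v, fun g hg => by simp [hGe] at hg⟩
          · exact two_cover G hGint hGcard hGne
        obtain ⟨w, hw⟩ := cover2
        refine ⟨{v, u, w}, fun e heE => ?_, ?_⟩
        · by_cases hv : v ∈ e
          · exact ⟨v, by simp, hv⟩
          · have heF : e ∈ F := Finset.mem_filter.mpr ⟨heE, hv⟩
            by_cases h1 : e = e1
            · exact ⟨u, by simp, h1 ▸ hu1⟩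
            · by_cases h2 : e = e2
              · exact ⟨u, by simp, h2 ▸ hu2⟩
              · have : e ∈ G := Finset.mem_erase.mpr ⟨h2, Finset.mem_erase.mpr ⟨h1, heF⟩⟩
                exact ⟨w, by simp, hw e this⟩
        · refine (Finset.card_insert_le _ _).trans ?_
          have := Finset.card_insert_le u {w}
          simp only [Finset.card_singleton] at this
          omega
  obtain ⟨C, hC, hCcard⟩ := key
  have := htau C hC
  omega
end

section
/- Let H be a 5-partite intersecting hypergraph with 8 edges and τ(H) ≥ 4. Then each of the 5 vertex classes contains at most one vertex of degree 3. -/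
theorem stmt11 {V : Type*} [DecidableEq V] (p : V → Fin 5) (E : Finset (Finset V))
    (hpart : Rpartite 5 p E) (hint : Intersecting E) (hcard : E.card = 8)
    (htau : ∀ C : Finset V, IsCover E C → 4 ≤ C.card) :
    ∀ i : Fin 5, ∀ u v : V, p u = i → p v = i →
      degree E u = 3 → degree E v = 3 → u = v := by
  intro i u v hu hv hdu hdv
  by_contra hne
  set A := E.filter (fun e => u ∈ e) with hA
  set B := E.filter (fun e => v ∈ e) with hB
  have hdisj : Disjoint A B := by
    rw [Finset.disjoint_left]
    intro e heA heB
    simp only [hA, hB, Finset.mem_filter] at heA heB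
    obtain ⟨w, _, huniq⟩ := hpart e heA.1 i
    exact hne ((huniq u ⟨heA.2, hu⟩).trans (huniq v ⟨heB.2, hv⟩).symm)
  have hsub : A ∪ B ⊆ E := by
    intro e he
    rcases Finset.mem_union.mp he with h | h <;>
      exact (Finset.mem_filter.mp h).1
  have hAB : (A ∪ B).card = 6 := by
    rw [Finset.card_union_of_disjoint hdisj]
    simp only [hA, hB]
    rw [show (E.filter (fun e => u ∈ e)).card = degree E u from rfl,
        show (E.filter (fun e => v ∈ e)).card = degree E v from rfl, hdu, hdv]
  have hR : (E \ (A ∪ B)).card = 2 := by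
    rw [Finset.card_sdiff_of_subset hsub, hcard, hAB]
  obtain ⟨e, f, hef, hR2⟩ := Finset.card_eq_two.mp hR
  have heE : e ∈ E := (Finset.mem_sdiff.mp (hR2 ▸ Finset.mem_insert_self e {f})).1
  have hfE : f ∈ E := (Finset.mem_sdiff.mp
    (hR2 ▸ Finset.mem_insert_of_mem (Finset.mem_singleton_self f))).1
  obtain ⟨w, hwe, hwf⟩ := hint e heE f hfE
  have hcov : IsCover E {u, v, w} := by
    intro g hg
    by_cases hgu : u ∈ g
    · exact ⟨u, by simp, hgu⟩
    by_cases hgv : v ∈ g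
    · exact ⟨v, by simp, hgv⟩
    have hgR : g ∈ E \ (A ∪ B) := by
      simp only [Finset.mem_sdiff, Finset.mem_union, hA, hB, Finset.mem_filter]
      tauto
    rw [hR2] at hgR
    rcases Finset.mem_insert.mp hgR with h | h
    · exact ⟨w, by simp, h ▸ hwe⟩
    · exact ⟨w, by simp, (Finset.mem_singleton.mp h) ▸ hwf⟩
  have := htau _ hcov
  have hle : ({u, v, w} : Finset V).card ≤ 3 :=
    (Finset.card_insert_le _ _).trans (by
      exact Nat.succ_le_succ (Finset.card_insert_le _ _))
  omega
end

section
/- The 5-partite hypergraph on vertex classes V1={1,2,3,4}, V2={5,6,7,8}, V3={9,10,11,12}, V4={13,14,15,16}, V5={17,18,19,20} with the 9 edges (1,5,9,13,17), (2,6,10,14,17), (3,7,10,13,18), (1,6,11,15,18), (2,7,9,15,19), (4,5,10,15,20), (4,7,11,16,17), (4,8,9,14,18), (4,6,12,13,19) is intersecting and has cover number exactly 4. -/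
/-- Class map: vertices `0`–`3` are class `0`, `4`–`7` class `1`, etc.
(Vertex `k` of the paper is vertex `k - 1` here.) -/
def p5 : Fin 20 → Fin 5 := fun v => ⟨v.val / 4, by omega⟩

def E5 : Finset (Finset (Fin 20)) :=
  { {0,4,8,12,16}, {1,5,9,13,16}, {2,6,9,12,17}, {0,5,10,14,17}, {1,6,8,14,18},
    {3,4,9,14,19}, {3,6,10,15,16}, {3,7,8,13,17}, {3,5,11,12,18} }

def E5L : List (List (Fin 20)) := [[0,4,8,12,16],[1,5,9,13,16],[2,6,9,12,17],[0,5,10,14,17],[1,6,8,14,18],[3,4,9,14,19],[3,6,10,15,16],[3,7,8,13,17],[3,5,11,12,18]]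

open Finset in
lemma bridge (a b c : Fin 20) (h : IsCover E5 ({a,b,c} : Finset (Fin 20))) :
    E5L.all (fun e => e.any (fun v => v == a || v == b || v == c)) = true := by
  unfold IsCover E5 at h
  have h1 := h _ (mem_insert_self _ _)
  have h2 := h _ (mem_insert_of_mem (mem_insert_self _ _))
  have h3 := h _ (mem_insert_of_mem (mem_insert_of_mem (mem_insert_self _ _)))
  have h4 := h _ (mem_insert_of_mem (mem_insert_of_mem (mem_insert_of_mem (mem_insert_self _ _))))
  have h5 := h _ (mem_insert_of_mem (mem_insert_of_mem (mem_insert_of_mem (mem_insert_of_mem (mem_insert_self _ _)))))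
  have h6 := h _ (mem_insert_of_mem (mem_insert_of_mem (mem_insert_of_mem (mem_insert_of_mem (mem_insert_of_mem (mem_insert_self _ _))))))
  have h7 := h _ (mem_insert_of_mem (mem_insert_of_mem (mem_insert_of_mem (mem_insert_of_mem (mem_insert_of_mem (mem_insert_of_mem (mem_insert_self _ _)))))))
  have h8 := h _ (mem_insert_of_mem (mem_insert_of_mem (mem_insert_of_mem (mem_insert_of_mem (mem_insert_of_mem (mem_insert_of_mem (mem_insert_of_mem (mem_insert_self _ _))))))))
  have h9 := h _ (mem_insert_of_mem (mem_insert_of_mem (mem_insert_of_mem (mem_insert_of_mem (mem_insert_of_mem (mem_insert_of_mem (mem_insert_of_mem (mem_insert_of_mem (mem_singleton_self _)))))))) )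
  clear h
  simp only [Finset.mem_insert, Finset.mem_singleton] at h1 h2 h3 h4 h5 h6 h7 h8 h9
  simp only [E5L, List.all_cons, List.all_nil, List.any_cons, List.any_nil,
    Bool.and_eq_true, Bool.or_eq_true, beq_iff_eq, and_true]
  refine ⟨?_,?_,?_,?_,?_,?_,?_,?_,?_⟩
  · obtain ⟨v, hv, he⟩ := h1; rcases he with rfl|rfl|rfl|rfl|rfl <;> rcases hv with rfl|rfl|rfl <;> simp
  · obtain ⟨v, hv, he⟩ := h2; rcases he with rfl|rfl|rfl|rfl|rfl <;> rcases hv with rfl|rfl|rfl <;> simp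
  · obtain ⟨v, hv, he⟩ := h3; rcases he with rfl|rfl|rfl|rfl|rfl <;> rcases hv with rfl|rfl|rfl <;> simp
  · obtain ⟨v, hv, he⟩ := h4; rcases he with rfl|rfl|rfl|rfl|rfl <;> rcases hv with rfl|rfl|rfl <;> simp
  · obtain ⟨v, hv, he⟩ := h5; rcases he with rfl|rfl|rfl|rfl|rfl <;> rcases hv with rfl|rfl|rfl <;> simp
  · obtain ⟨v, hv, he⟩ := h6; rcases he with rfl|rfl|rfl|rfl|rfl <;> rcases hv with rfl|rfl|rfl <;> simp
  · obtain ⟨v, hv, he⟩ := h7; rcases he with rfl|rfl|rfl|rfl|rfl <;> rcases hv with rfl|rfl|rfl <;> simp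
  · obtain ⟨v, hv, he⟩ := h8; rcases he with rfl|rfl|rfl|rfl|rfl <;> rcases hv with rfl|rfl|rfl <;> simp
  · obtain ⟨v, hv, he⟩ := h9; rcases he with rfl|rfl|rfl|rfl|rfl <;> rcases hv with rfl|rfl|rfl <;> simp

lemma keyL : ∀ a b c : Fin 20, ¬ (E5L.all (fun e => e.any (fun v => v == a || v == b || v == c)) = true) := by decide

lemma rpart : Rpartite 5 p5 E5 := by
  intro e he i
  simp only [E5, Finset.mem_insert, Finset.mem_singleton] at he
  unfold ExistsUnique
  rcases he with rfl|rfl|rfl|rfl|rfl|rfl|rfl|rfl|rfl <;> revert i <;> decide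

lemma inter : Intersecting E5 := by
  intro e he f hf
  simp only [E5, Finset.mem_insert, Finset.mem_singleton] at he hf
  rcases he with rfl|rfl|rfl|rfl|rfl|rfl|rfl|rfl|rfl <;>
    rcases hf with rfl|rfl|rfl|rfl|rfl|rfl|rfl|rfl|rfl <;> decide

lemma cover4 : IsCover E5 ({3,16,17,18} : Finset (Fin 20)) := by
  intro e he
  simp only [E5, Finset.mem_insert, Finset.mem_singleton] at he
  rcases he with rfl|rfl|rfl|rfl|rfl|rfl|rfl|rfl|rfl <;> decide

theorem stmt12 :
    Rpartite 5 p5 E5 ∧ Intersecting E5 ∧ E5.card = 9 ∧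
    (∀ C : Finset (Fin 20), IsCover E5 C → 4 ≤ C.card) ∧
    (∃ C : Finset (Fin 20), IsCover E5 C ∧ C.card = 4) := by
  refine ⟨rpart, inter, by decide, ?_, ⟨{3,16,17,18}, cover4, by decide⟩⟩
  intro C hC
  by_contra hlt
  push_neg at hlt
  have h3 : C.card ≤ 3 := by omega
  obtain ⟨C', hsub, hcard⟩ := Finset.exists_superset_card_eq h3
    (by simp : (3:ℕ) ≤ Fintype.card (Fin 20))
  obtain ⟨a, b, c, -, -, -, rfl⟩ := Finset.card_eq_three.mp hcard
  have hC' : IsCover E5 ({a,b,c} : Finset (Fin 20)) :=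
    fun e he => (hC e he).imp (fun v hv => ⟨hsub hv.1, hv.2⟩)
  exact keyL a b c (bridge a b c hC')
end

section
/- f(5) = 9, where f(r) is the minimum number of edges in an r-partite intersecting hypergraph with cover number at least r-1. -/
-- ===== auxiliary lemmas =====

set_option maxHeartbeats 1000000

lemma mem_of_toList {α : Type*} [Inhabited α] (S : Finset α) :
    ∀ x ∈ S, ∃ n, n < S.card ∧ S.toList.getD n default = x := by
  intro x hx
  have hx' : x ∈ S.toList := Finset.mem_toList.2 hx
  obtain ⟨n, hn, hxe⟩ := List.mem_iff_getElem.1 hx'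
  refine ⟨n, by simpa using hn, ?_⟩
  rw [List.getD_eq_getElem _ _ hn, hxe]

lemma subset_three {α : Type*} [Inhabited α] [DecidableEq α] {S : Finset α} (h : S.card ≤ 3) :
    ∃ a b c : α, S ⊆ ({a, b, c} : Finset α) := by
  refine ⟨S.toList.getD 0 default, S.toList.getD 1 default, S.toList.getD 2 default, ?_⟩
  intro x hx
  obtain ⟨n, hn, rfl⟩ := mem_of_toList S x hx
  have : n = 0 ∨ n = 1 ∨ n = 2 := by omega
  rcases this with rfl | rfl | rfl <;> simp

namespace Constr
def blk : Fin 5 → Fin 9 → Fin 4 :=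
  ![![0,0,0,0,1,2,3,3,2],
    ![0,1,2,3,0,0,2,3,2],
    ![0,1,2,3,1,2,1,0,0],
    ![0,1,2,3,2,3,3,2,1],
    ![0,1,2,3,3,1,0,1,3]]

abbrev Vtx := Fin 5 × Fin 4

def g : Fin 9 → Finset Vtx := fun k => Finset.univ.image (fun i => (i, blk i k))

lemma mem_g {v : Vtx} {k : Fin 9} : v ∈ g k ↔ v.2 = blk v.1 k := by
  constructor
  · rintro hv
    obtain ⟨i, -, rfl⟩ := Finset.mem_image.1 hv
    rfl
  · intro hv
    exact Finset.mem_image.2 ⟨v.1, Finset.mem_univ _, by rw [← hv]⟩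

def exE : Finset (Finset Vtx) := Finset.univ.image g

lemma hasConfig9 : HasConfig 5 9 := by
  refine ⟨Vtx, Prod.fst, exE, ?_, ?_, ?_, ?_⟩
  · rintro e he i
    obtain ⟨k, -, rfl⟩ := Finset.mem_image.1 he
    refine ⟨(i, blk i k), ⟨mem_g.2 rfl, rfl⟩, ?_⟩
    rintro ⟨i', b'⟩ ⟨hv, rfl⟩
    exact Prod.ext rfl (mem_g.1 hv)
  · rintro e he f hf
    obtain ⟨k, -, rfl⟩ := Finset.mem_image.1 he
    obtain ⟨l, -, rfl⟩ := Finset.mem_image.1 hf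
    obtain ⟨i, hi⟩ : ∃ i, blk i k = blk i l := by revert k l; decide
    exact ⟨(i, blk i k), mem_g.2 rfl, mem_g.2 hi⟩
  · rw [exE, Finset.card_image_of_injective _ ?_, Finset.card_univ, Fintype.card_fin]
    intro k l hkl
    have : ∀ i, blk i k = blk i l := by
      intro i
      have : (i, blk i k) ∈ g l := hkl ▸ mem_g.2 rfl
      exact mem_g.1 this
    revert this; revert k l; decide
  · intro C hC
    by_contra h4
    push_neg at h4
    obtain ⟨v1, v2, v3, hsub⟩ := subset_three (S := C) (by omega)
    have key : ∀ k : Fin 9, blk v1.1 k = v1.2 ∨ blk v2.1 k = v2.2 ∨ blk v3.1 k = v3.2 := by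
      intro k
      obtain ⟨v, hvC, hvk⟩ := hC (g k) (Finset.mem_image.2 ⟨k, Finset.mem_univ _, rfl⟩)
      have hv2 := mem_g.1 hvk
      have := hsub hvC
      simp only [Finset.mem_insert, Finset.mem_singleton] at this
      rcases this with rfl | rfl | rfl
      · exact Or.inl hv2.symm
      · exact Or.inr (Or.inl hv2.symm)
      · exact Or.inr (Or.inr hv2.symm)
    revert key
    have : ∀ v1 v2 v3 : Vtx,
        ¬ (∀ k, blk v1.1 k = v1.2 ∨ blk v2.1 k = v2.2 ∨ blk v3.1 k = v3.2) := by decide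
    exact this v1 v2 v3
end Constr


namespace Core


def cov {β : Type*} [DecidableEq β] (c : Fin 5 → Fin 8 → β) (b : Fin 5 × Fin 8) : Finset (Fin 8) :=
  Finset.univ.filter (fun l => c b.1 b.2 = c b.1 l)

variable {β : Type*} [DecidableEq β] {c : Fin 5 → Fin 8 → β}

lemma mem_cov {b : Fin 5 × Fin 8} {l : Fin 8} : l ∈ cov c b ↔ c b.1 b.2 = c b.1 l := by
  simp [cov]

lemma self_mem_cov {i : Fin 5} {k : Fin 8} : k ∈ cov c (i, k) := mem_cov.2 rfl

lemma mem_of_toList8 (S : Finset (Fin 8)) :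
    ∀ x ∈ S, ∃ n, n < S.card ∧ S.toList.getD n 0 = x := by
  intro x hx
  have hx' : x ∈ S.toList := Finset.mem_toList.2 hx
  obtain ⟨n, hn, hxe⟩ := List.mem_iff_getElem.1 hx'
  refine ⟨n, by simpa using hn, ?_⟩
  rw [List.getD_eq_getElem _ _ hn, hxe]

lemma subset_two8 {S : Finset (Fin 8)} (h : S.card ≤ 2) :
    ∃ a b, S ⊆ ({a, b} : Finset (Fin 8)) := by
  refine ⟨S.toList.getD 0 0, S.toList.getD 1 0, fun x hx => ?_⟩
  obtain ⟨n, hn, rfl⟩ := mem_of_toList8 S x hx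
  have : n = 0 ∨ n = 1 := by omega
  rcases this with rfl | rfl <;> simp

lemma subset_four8 {S : Finset (Fin 8)} (h : S.card ≤ 4) :
    ∃ a b d e, S ⊆ ({a, b, d, e} : Finset (Fin 8)) := by
  refine ⟨S.toList.getD 0 0, S.toList.getD 1 0, S.toList.getD 2 0, S.toList.getD 3 0,
    fun x hx => ?_⟩
  obtain ⟨n, hn, rfl⟩ := mem_of_toList8 S x hx
  have : n = 0 ∨ n = 1 ∨ n = 2 ∨ n = 3 := by omega
  rcases this with rfl | rfl | rfl | rfl <;> simp

lemma pair_block (h : ∀ k l, ∃ i, c i k = c i l) (k l : Fin 8) :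
    ∃ b, k ∈ cov c b ∧ l ∈ cov c b := by
  obtain ⟨i, hi⟩ := h k l
  exact ⟨(i, k), self_mem_cov, mem_cov.2 hi⟩

lemma card3ne' : ∀ a b d : Fin 8, (a ≠ b ∧ a ≠ d ∧ b ≠ d) →
    ({a, b, d} : Finset (Fin 8)).card = 3 := by decide
lemma card3ne (a b d : Fin 8) (h1 : a ≠ b) (h2 : a ≠ d) (h3 : b ≠ d) :
    ({a, b, d} : Finset (Fin 8)).card = 3 := card3ne' a b d ⟨h1, h2, h3⟩

lemma card4ne' : ∀ a b d e : Fin 8, (a ≠ b ∧ a ≠ d ∧ a ≠ e ∧ b ≠ d ∧ b ≠ e ∧ d ≠ e) →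
    ({a, b, d, e} : Finset (Fin 8)).card = 4 := by decide
lemma card4ne (a b d e : Fin 8) (h1 : a ≠ b) (h2 : a ≠ d) (h3 : a ≠ e) (h4 : b ≠ d)
    (h5 : b ≠ e) (h6 : d ≠ e) : ({a, b, d, e} : Finset (Fin 8)).card = 4 :=
  card4ne' a b d e ⟨h1, h2, h3, h4, h5, h6⟩

lemma card3ne5' : ∀ a b d : Fin 5, (a ≠ b ∧ a ≠ d ∧ b ≠ d) →
    ({a, b, d} : Finset (Fin 5)).card = 3 := by decide
lemma card3ne5 (a b d : Fin 5) (h1 : a ≠ b) (h2 : a ≠ d) (h3 : b ≠ d) :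
    ({a, b, d} : Finset (Fin 5)).card = 3 := card3ne5' a b d ⟨h1, h2, h3⟩
lemma fin5six' : ∀ k1 k2 k3 k4 b d : Fin 5, ¬(k1≠k2 ∧ k1≠k3 ∧ k1≠k4 ∧ k2≠k3 ∧ k2≠k4 ∧ k3≠k4 ∧
    b≠k1 ∧ b≠k2 ∧ b≠k3 ∧ b≠k4 ∧ d≠k1 ∧ d≠k2 ∧ d≠k3 ∧ d≠k4 ∧ b≠d) := by decide
lemma fin5six (k1 k2 k3 k4 b d : Fin 5) (h1 : k1≠k2) (h2 : k1≠k3) (h3 : k1≠k4) (h4 : k2≠k3)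
    (h5 : k2≠k4) (h6 : k3≠k4) (h7 : b≠k1) (h8 : b≠k2) (h9 : b≠k3) (h10 : b≠k4)
    (h11 : d≠k1) (h12 : d≠k2) (h13 : d≠k3) (h14 : d≠k4) (h15 : b≠d) : False :=
  fin5six' k1 k2 k3 k4 b d ⟨h1,h2,h3,h4,h5,h6,h7,h8,h9,h10,h11,h12,h13,h14,h15⟩


lemma deep (h : ∀ k l, ∃ i, c i k = c i l)
    (i0 : Fin 5) (T S' : Finset (Fin 8))
    (hTdef : T = cov c (i0, (0 : Fin 8)))
    (hS'def : S' = Finset.univ \ T)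
    (hT3 : T.card = 3) (hS5 : S'.card = 5)
    (hdeg : ∀ b, (cov c b).card ≤ 3)
    (hS2 : ∀ b, (cov c b ∩ S').card ≤ 2) :
    ∃ b1 b2 b3 : Fin 5 × Fin 8, ∀ l, l ∈ cov c b1 ∨ l ∈ cov c b2 ∨ l ∈ cov c b3 := by
  by_contra hnc
  have hTS : ∀ l : Fin 8, l ∈ S' ↔ l ∉ T := fun l => by simp [hS'def]
  have hST : ∀ l ∈ S', ∀ t ∈ T, l ≠ t := by
    intro l hl t ht heq
    exact ((hTS l).1 hl) (heq ▸ ht)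
  obtain ⟨A, B, C, hAB, hAC, hBC, hTlist⟩ := Finset.card_eq_three.1 hT3
  have hAT : A ∈ T := by rw [hTlist]; simp
  have hBT : B ∈ T := by rw [hTlist]; simp
  have hCT : C ∈ T := by rw [hTlist]; simp
  -- three distinct elements of T exhaust T
  have hTeq : ∀ t1 t2 t3 : Fin 8, t1 ∈ T → t2 ∈ T → t3 ∈ T → t1 ≠ t2 → t1 ≠ t3 → t2 ≠ t3 →
      ∀ l ∈ T, l = t1 ∨ l = t2 ∨ l = t3 := by
    intro t1 t2 t3 h1 h2 h3 h12 h13 h23 l hl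
    have hsub : ({t1, t2, t3} : Finset (Fin 8)) ⊆ T := by
      intro x hx
      simp only [Finset.mem_insert, Finset.mem_singleton] at hx
      rcases hx with rfl | rfl | rfl <;> assumption
    have heq : ({t1, t2, t3} : Finset (Fin 8)) = T :=
      Finset.eq_of_subset_of_card_le hsub (by rw [hT3, card3ne t1 t2 t3 h12 h13 h23])
    rw [← heq] at hl
    simpa using hl
  -- mate distinctness: no block meets S' in ≥ 3 points
  have mateNe : ∀ (b : Fin 8), b ∈ S' → ∀ (j : Fin 5) (m m' : Fin 8), m ∈ S' → m' ∈ S' →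
      m ≠ m' → m ≠ b → m' ≠ b → c j b = c j m → c j b = c j m' → False := by
    intro b hb j m m' hm hm' hmm' hmb hm'b h1 h2
    have hsub : ({b, m, m'} : Finset (Fin 8)) ⊆ cov c (j, b) ∩ S' := by
      intro x hx
      simp only [Finset.mem_insert, Finset.mem_singleton] at hx
      rcases hx with rfl | rfl | rfl
      · exact Finset.mem_inter.2 ⟨self_mem_cov, hb⟩
      · exact Finset.mem_inter.2 ⟨mem_cov.2 h1, hm⟩
      · exact Finset.mem_inter.2 ⟨mem_cov.2 h2, hm'⟩
    have := (Finset.card_le_card hsub).trans (hS2 (j, b))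
    rw [card3ne b m m' (Ne.symm hmb) (Ne.symm hm'b) hmm'] at this
    omega
  -- existence of attached pairs
  have hcovT : ∀ t ∈ T, cov c (i0, t) = T := by
    intro t ht
    have h0t : c i0 0 = c i0 t := by rw [hTdef] at ht; exact mem_cov.1 ht
    rw [hTdef]
    ext l
    simp only [mem_cov]
    rw [← h0t]
  have attEx : ∀ t ∈ T, ∃ u v : Fin 8, u ∈ S' ∧ v ∈ S' ∧ u ≠ v ∧
      ∃ i, c i t = c i u ∧ c i t = c i v := by
    intro t ht
    by_contra hno
    push_neg at hno
    have hcard1 : ∀ i : Fin 5, (cov c (i, t) ∩ S').card ≤ 1 := by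
      intro i
      by_contra hc
      push_neg at hc
      obtain ⟨u, hu, v, hv, huv⟩ := Finset.one_lt_card.1 hc
      have hu' := Finset.mem_inter.1 hu
      have hv' := Finset.mem_inter.1 hv
      exact hno u v hu'.2 hv'.2 huv i (mem_cov.1 hu'.1) (mem_cov.1 hv'.1)
    have hsub : S' ⊆ (Finset.univ.erase i0).biUnion (fun i => cov c (i, t) ∩ S') := by
      intro u hu
      obtain ⟨i, hi⟩ := h t u
      have hii0 : i ≠ i0 := by
        intro heq
        have : u ∈ T := by
          rw [← hcovT t ht]
          exact mem_cov.2 (heq ▸ hi)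
        exact (hTS u).1 hu this
      refine Finset.mem_biUnion.2 ⟨i, ?_, ?_⟩
      · exact Finset.mem_erase.2 ⟨hii0, Finset.mem_univ _⟩
      · exact Finset.mem_inter.2 ⟨mem_cov.2 hi, hu⟩
    have h5 := (Finset.card_le_card hsub).trans Finset.card_biUnion_le
    have hsum : ∑ i ∈ Finset.univ.erase i0, (cov c (i, t) ∩ S').card ≤
        ∑ _i ∈ Finset.univ.erase i0, 1 :=
      Finset.sum_le_sum (fun i _ => hcard1 i)
    have hcnt : (Finset.univ.erase i0).card = 4 := by
      rw [Finset.card_erase_of_mem (Finset.mem_univ _)]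
      simp
    rw [Finset.sum_const, hcnt, smul_eq_mul, mul_one] at hsum
    omega
  have cross : ∀ t t' t'' u v u' v' : Fin 8, t ∈ T → t' ∈ T → t'' ∈ T → t ≠ t' → t'' ≠ t → t'' ≠ t' →
      u ∈ S' → v ∈ S' → u' ∈ S' → v' ∈ S' → u ≠ v → u' ≠ v' →
      u ≠ u' → u ≠ v' → v ≠ u' → v ≠ v' →
      (∃ i, c i t = c i u ∧ c i t = c i v) → (∃ i, c i t' = c i u' ∧ c i t' = c i v') → False := by
    intro t t' t'' u v u' v' ht ht' ht'' htt' ht''t ht''t' hu hv hu' hv' huv hu'v' d1 d2 d3 d4 hA1 hA2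
    obtain ⟨i1, hi1u, hi1v⟩ := hA1
    obtain ⟨i2, hi2u, hi2v⟩ := hA2
    have hKsub : ({u, v, u', v'} : Finset (Fin 8)) ⊆ S' := by
      intro x hx
      simp only [Finset.mem_insert, Finset.mem_singleton] at hx
      rcases hx with rfl | rfl | rfl | rfl <;> assumption
    have hz1 : (S' \ ({u, v, u', v'} : Finset (Fin 8))).card = 1 := by
      rw [Finset.card_sdiff_of_subset hKsub, hS5, card4ne u v u' v' huv d1 d2 d3 d4 hu'v']
    obtain ⟨z, hzeq⟩ := Finset.card_eq_one.1 hz1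
    have hzm : z ∈ S' \ ({u, v, u', v'} : Finset (Fin 8)) := by rw [hzeq]; simp
    have hzS : z ∈ S' := (Finset.mem_sdiff.1 hzm).1
    obtain ⟨γ, hγ1, hγ2⟩ := pair_block h t'' z
    refine hnc ⟨(i1, t), (i2, t'), γ, fun l => ?_⟩
    by_cases hlT : l ∈ T
    · rcases hTeq t t' t'' ht ht' ht'' htt' (Ne.symm ht''t) (Ne.symm ht''t') l hlT with rfl | rfl | rfl
      · exact Or.inl self_mem_cov
      · exact Or.inr (Or.inl self_mem_cov)
      · exact Or.inr (Or.inr hγ1)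
    · have hlS : l ∈ S' := (hTS l).2 hlT
      by_cases hlK : l ∈ ({u, v, u', v'} : Finset (Fin 8))
      · simp only [Finset.mem_insert, Finset.mem_singleton] at hlK
        rcases hlK with rfl | rfl | rfl | rfl
        · exact Or.inl (mem_cov.2 hi1u)
        · exact Or.inl (mem_cov.2 hi1v)
        · exact Or.inr (Or.inl (mem_cov.2 hi2u))
        · exact Or.inr (Or.inl (mem_cov.2 hi2v))
      · have hmem : l ∈ S' \ ({u, v, u', v'} : Finset (Fin 8)) := Finset.mem_sdiff.2 ⟨hlS, hlK⟩
        rw [hzeq] at hmem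
        rw [Finset.mem_singleton.1 hmem]
        exact Or.inr (Or.inr hγ2)
  have same : ∀ t u v u' v' : Fin 8, t ∈ T →
      u ∈ S' → v ∈ S' → u' ∈ S' → v' ∈ S' → u ≠ v → u' ≠ v' →
      u ≠ u' → u ≠ v' → v ≠ u' → v ≠ v' →
      (∃ i, c i t = c i u ∧ c i t = c i v) → (∃ i, c i t = c i u' ∧ c i t = c i v') → False := by
    intro t u v u' v' ht hu hv hu' hv' huv hu'v' d1 d2 d3 d4 hA1 hA2
    obtain ⟨i1, hi1u, hi1v⟩ := hA1
    obtain ⟨i2, hi2u, hi2v⟩ := hA2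
    obtain ⟨t1, ht1, t2, ht2, ht12, ht1t, ht2t⟩ :
        ∃ t1 ∈ T, ∃ t2 ∈ T, t1 ≠ t2 ∧ t1 ≠ t ∧ t2 ≠ t := by
      rcases hTeq A B C hAT hBT hCT hAB hAC hBC t ht with rfl | rfl | rfl
      · exact ⟨B, hBT, C, hCT, hBC, Ne.symm hAB, Ne.symm hAC⟩
      · exact ⟨A, hAT, C, hCT, hAC, hAB, Ne.symm hBC⟩
      · exact ⟨A, hAT, B, hBT, hAB, hAC, hBC⟩
    have hKsub : ({u, v, u', v'} : Finset (Fin 8)) ⊆ S' := by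
      intro x hx
      simp only [Finset.mem_insert, Finset.mem_singleton] at hx
      rcases hx with rfl | rfl | rfl | rfl <;> assumption
    have hz1 : (S' \ ({u, v, u', v'} : Finset (Fin 8))).card = 1 := by
      rw [Finset.card_sdiff_of_subset hKsub, hS5, card4ne u v u' v' huv d1 d2 d3 d4 hu'v']
    obtain ⟨z, hzeq⟩ := Finset.card_eq_one.1 hz1
    have hzm : z ∈ S' \ ({u, v, u', v'} : Finset (Fin 8)) := by rw [hzeq]; simp
    have hzS : z ∈ S' := (Finset.mem_sdiff.1 hzm).1
    have hzK := (Finset.mem_sdiff.1 hzm).2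
    simp only [Finset.mem_insert, Finset.mem_singleton] at hzK
    push_neg at hzK
    obtain ⟨hzu, hzv, hzu', hzv'⟩ := hzK
    obtain ⟨iB, hiB⟩ := h t1 z
    obtain ⟨iC, hiC⟩ := h t2 z
    have claim : ∀ (s : Fin 8), s ∈ T → s ≠ t → ∀ (j : Fin 5), c j s = c j z →
        ∀ y, y ∈ S' → y ≠ z → c j s = c j y → False := by
      intro s hs hst j hjz y hy hyz hjy
      have hyK : y ∈ ({u, v, u', v'} : Finset (Fin 8)) := by
        by_contra hyK
        have hmem : y ∈ S' \ ({u, v, u', v'} : Finset (Fin 8)) := Finset.mem_sdiff.2 ⟨hy, hyK⟩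
        rw [hzeq] at hmem
        exact hyz (Finset.mem_singleton.1 hmem)
      obtain ⟨t3, ht3, ht3s, ht3t⟩ : ∃ t3 ∈ T, t3 ≠ s ∧ t3 ≠ t := by
        by_contra hno
        push_neg at hno
        have hsub : T ⊆ {s, t} := by
          intro x hx
          by_cases hxs : x = s
          · simp [hxs]
          · simp [hno x hx hxs]
        have hc2 : ({s, t} : Finset (Fin 8)).card ≤ 2 :=
          (Finset.card_insert_le _ _).trans (by simp)
        have := (Finset.card_le_card hsub).trans hc2
        omega
      have hAtts : ∃ i, c i s = c i z ∧ c i s = c i y := ⟨j, hjz, hjy⟩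
      simp only [Finset.mem_insert, Finset.mem_singleton] at hyK
      rcases hyK with rfl | rfl | rfl | rfl
      · exact cross s t t3 z y u' v' hs ht ht3 hst ht3s ht3t hzS hy hu' hv'
          (Ne.symm hyz) hu'v' hzu' hzv' d1 d2 hAtts ⟨i2, hi2u, hi2v⟩
      · exact cross s t t3 z y u' v' hs ht ht3 hst ht3s ht3t hzS hy hu' hv'
          (Ne.symm hyz) hu'v' hzu' hzv' d3 d4 hAtts ⟨i2, hi2u, hi2v⟩
      · exact cross s t t3 z y u v hs ht ht3 hst ht3s ht3t hzS hy hu hv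
          (Ne.symm hyz) huv hzu hzv (Ne.symm d1) (Ne.symm d3) hAtts ⟨i1, hi1u, hi1v⟩
      · exact cross s t t3 z y u v hs ht ht3 hst ht3s ht3t hzS hy hu hv
          (Ne.symm hyz) huv hzu hzv (Ne.symm d2) (Ne.symm d4) hAtts ⟨i1, hi1u, hi1v⟩
    by_cases hBXC : iB = iC
    · subst hBXC
      have ht2mem : c iB t1 = c iB t2 := hiB.trans hiC.symm
      refine hnc ⟨(iB, t1), (i1, t), (i2, t), fun l => ?_⟩
      by_cases hlT : l ∈ T
      · rcases hTeq t t1 t2 ht ht1 ht2 (Ne.symm ht1t) (Ne.symm ht2t) ht12 l hlT with rfl | rfl | rfl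
        · exact Or.inr (Or.inl self_mem_cov)
        · exact Or.inl self_mem_cov
        · exact Or.inl (mem_cov.2 ht2mem)
      · have hlS := (hTS l).2 hlT
        by_cases hlK : l ∈ ({u, v, u', v'} : Finset (Fin 8))
        · simp only [Finset.mem_insert, Finset.mem_singleton] at hlK
          rcases hlK with rfl | rfl | rfl | rfl
          · exact Or.inr (Or.inl (mem_cov.2 hi1u))
          · exact Or.inr (Or.inl (mem_cov.2 hi1v))
          · exact Or.inr (Or.inr (mem_cov.2 hi2u))
          · exact Or.inr (Or.inr (mem_cov.2 hi2v))
        · have hmem : l ∈ S' \ ({u, v, u', v'} : Finset (Fin 8)) := Finset.mem_sdiff.2 ⟨hlS, hlK⟩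
          rw [hzeq] at hmem
          rw [Finset.mem_singleton.1 hmem]
          exact Or.inl (mem_cov.2 hiB)
    · obtain ⟨k1, hk1⟩ := h z u
      obtain ⟨k2, hk2⟩ := h z v
      obtain ⟨k3, hk3⟩ := h z u'
      obtain ⟨k4, hk4⟩ := h z v'
      have k12 : k1 ≠ k2 := fun he =>
        mateNe z hzS k1 u v hu hv huv (Ne.symm hzu) (Ne.symm hzv) hk1 (he ▸ hk2)
      have k13 : k1 ≠ k3 := fun he =>
        mateNe z hzS k1 u u' hu hu' d1 (Ne.symm hzu) (Ne.symm hzu') hk1 (he ▸ hk3)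
      have k14 : k1 ≠ k4 := fun he =>
        mateNe z hzS k1 u v' hu hv' d2 (Ne.symm hzu) (Ne.symm hzv') hk1 (he ▸ hk4)
      have k23 : k2 ≠ k3 := fun he =>
        mateNe z hzS k2 v u' hv hu' d3 (Ne.symm hzv) (Ne.symm hzu') hk2 (he ▸ hk3)
      have k24 : k2 ≠ k4 := fun he =>
        mateNe z hzS k2 v v' hv hv' d4 (Ne.symm hzv) (Ne.symm hzv') hk2 (he ▸ hk4)
      have k34 : k3 ≠ k4 := fun he =>
        mateNe z hzS k3 u' v' hu' hv' hu'v' (Ne.symm hzu') (Ne.symm hzv') hk3 (he ▸ hk4)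
      have bk1 : iB ≠ k1 := fun he =>
        claim t1 ht1 ht1t iB hiB u hu (Ne.symm hzu) (hiB.trans (he ▸ hk1))
      have bk2 : iB ≠ k2 := fun he =>
        claim t1 ht1 ht1t iB hiB v hv (Ne.symm hzv) (hiB.trans (he ▸ hk2))
      have bk3 : iB ≠ k3 := fun he =>
        claim t1 ht1 ht1t iB hiB u' hu' (Ne.symm hzu') (hiB.trans (he ▸ hk3))
      have bk4 : iB ≠ k4 := fun he =>
        claim t1 ht1 ht1t iB hiB v' hv' (Ne.symm hzv') (hiB.trans (he ▸ hk4))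
      have ck1 : iC ≠ k1 := fun he =>
        claim t2 ht2 ht2t iC hiC u hu (Ne.symm hzu) (hiC.trans (he ▸ hk1))
      have ck2 : iC ≠ k2 := fun he =>
        claim t2 ht2 ht2t iC hiC v hv (Ne.symm hzv) (hiC.trans (he ▸ hk2))
      have ck3 : iC ≠ k3 := fun he =>
        claim t2 ht2 ht2t iC hiC u' hu' (Ne.symm hzu') (hiC.trans (he ▸ hk3))
      have ck4 : iC ≠ k4 := fun he =>
        claim t2 ht2 ht2t iC hiC v' hv' (Ne.symm hzv') (hiC.trans (he ▸ hk4))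
      exact fin5six k1 k2 k3 k4 iB iC k12 k13 k14 k23 k24 k34 bk1 bk2 bk3 bk4 ck1 ck2 ck3 ck4 hBXC
  have hint : ∀ t t' u v u' v' : Fin 8, t ∈ T → t' ∈ T →
      u ∈ S' → v ∈ S' → u' ∈ S' → v' ∈ S' → u ≠ v → u' ≠ v' →
      (∃ i, c i t = c i u ∧ c i t = c i v) → (∃ i, c i t' = c i u' ∧ c i t' = c i v') →
      u = u' ∨ u = v' ∨ v = u' ∨ v = v' := by
    intro t t' u v u' v' ht ht' hu hv hu' hv' huv hu'v' h1 h2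
    by_contra hd
    push_neg at hd
    obtain ⟨d1, d2, d3, d4⟩ := hd
    by_cases htt : t = t'
    · subst htt
      exact same t u v u' v' ht hu hv hu' hv' huv hu'v' d1 d2 d3 d4 h1 h2
    · obtain ⟨t'', ht'', h1'', h2''⟩ : ∃ t'' ∈ T, t'' ≠ t ∧ t'' ≠ t' := by
        by_contra hno
        push_neg at hno
        have hsub : T ⊆ {t, t'} := by
          intro x hx
          by_cases hxt : x = t
          · simp [hxt]
          · simp [hno x hx hxt]
        have hc2 : ({t, t'} : Finset (Fin 8)).card ≤ 2 :=
          (Finset.card_insert_le _ _).trans (by simp)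
        have := (Finset.card_le_card hsub).trans hc2
        omega
      exact cross t t' t'' u v u' v' ht ht' ht'' htt h1'' h2'' hu hv hu' hv' huv hu'v'
        d1 d2 d3 d4 h1 h2
  by_cases hstar : ∃ w ∈ S', ∀ t u v : Fin 8, t ∈ T → u ∈ S' → v ∈ S' → u ≠ v →
      (∃ i, c i t = c i u ∧ c i t = c i v) → (u = w ∨ v = w)
  · -- STAR CASE
    obtain ⟨w, hwS, hw⟩ := hstar
    have hQ : ∀ x ∈ S'.erase w, ∃ s, s ∈ T ∧ ∃ t1 t2 : Fin 8, ∃ j j' : Fin 5,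
        t1 ∈ T ∧ t2 ∈ T ∧ s ≠ t1 ∧ s ≠ t2 ∧ t1 ≠ t2 ∧
        w ∈ cov c (j, x) ∧ s ∈ cov c (j, x) ∧ t1 ∈ cov c (j', x) ∧ t2 ∈ cov c (j', x) := by
      intro x hx
      obtain ⟨hxw, hxS⟩ := Finset.mem_erase.1 hx
      have hNm : ∀ m ∈ (S'.erase w).erase x, m ∈ S' ∧ m ≠ x ∧ m ≠ w := by
        intro m hm
        obtain ⟨hmx, hm2⟩ := Finset.mem_erase.1 hm
        obtain ⟨hmw, hmS⟩ := Finset.mem_erase.1 hm2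
        exact ⟨hmS, hmx, hmw⟩
      have hNcard : ((S'.erase w).erase x).card = 3 := by
        rw [Finset.card_erase_of_mem hx, Finset.card_erase_of_mem hwS, hS5]
      choose f hfspec using (fun m => h x m)
      have hfinj : Set.InjOn f ((S'.erase w).erase x) := by
        intro m hm m' hm' heq
        by_contra hne
        obtain ⟨hmS, hmx, hmw⟩ := hNm m (Finset.mem_coe.1 hm)
        obtain ⟨hm'S, hm'x, hm'w⟩ := hNm m' (Finset.mem_coe.1 hm')
        exact mateNe x hxS (f m) m m' hmS hm'S hne hmx hm'x (hfspec m) (heq ▸ hfspec m')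
      have hIm : (((S'.erase w).erase x).image f).card = 3 := by
        rw [Finset.card_image_of_injOn hfinj, hNcard]
      have hcompl : ((Finset.univ : Finset (Fin 5)) \ ((S'.erase w).erase x).image f).card = 2 := by
        rw [Finset.card_sdiff_of_subset (Finset.subset_univ _), hIm]
        simp
      obtain ⟨jw, hjw⟩ := h x w
      have hjwIm : jw ∉ ((S'.erase w).erase x).image f := by
        intro hmem
        obtain ⟨m, hm, hfm⟩ := Finset.mem_image.1 hmem
        obtain ⟨hmS, hmx, hmw⟩ := hNm m hm
        exact mateNe x hxS jw w m hwS hmS (Ne.symm hmw) (Ne.symm hxw) hmx hjw (hfm ▸ hfspec m)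
      choose g hgspec using (fun t => h t x)
      have hgIm : ∀ t, t ∈ T → g t ∉ ((S'.erase w).erase x).image f := by
        intro t ht hmem
        obtain ⟨m, hm, hfm⟩ := Finset.mem_image.1 hmem
        obtain ⟨hmS, hmx, hmw⟩ := hNm m hm
        have hAtt : ∃ i, c i t = c i x ∧ c i t = c i m :=
          ⟨g t, hgspec t, (hgspec t).trans (hfm ▸ hfspec m)⟩
        rcases hw t x m ht hxS hmS (Ne.symm hmx) hAtt with h1 | h1
        · exact hxw h1
        · exact hmw h1
      have inner : ∀ ta tb tc : Fin 8, ta ∈ T → tb ∈ T → tc ∈ T → ta ≠ tb → ta ≠ tc → tb ≠ tc →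
          g ta = g tb → ∃ s, s ∈ T ∧ ∃ t1 t2 : Fin 8, ∃ j j' : Fin 5,
          t1 ∈ T ∧ t2 ∈ T ∧ s ≠ t1 ∧ s ≠ t2 ∧ t1 ≠ t2 ∧
          w ∈ cov c (j, x) ∧ s ∈ cov c (j, x) ∧ t1 ∈ cov c (j', x) ∧ t2 ∈ cov c (j', x) := by
        intro ta tb tc hta htb htc hab hac hbc hgg
        have htbm : c (g ta) x = c (g ta) tb := by rw [hgg]; exact (hgspec tb).symm
        have hgtajw : g ta ≠ jw := by
          intro he
          have hm1 : ta ∈ cov c (jw, x) := mem_cov.2 (by rw [← he]; exact (hgspec ta).symm)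
          have hm2 : tb ∈ cov c (jw, x) := mem_cov.2 (by rw [← he]; exact htbm)
          have hsub : ({x, w, ta, tb} : Finset (Fin 8)) ⊆ cov c (jw, x) := by
            intro y hy
            simp only [Finset.mem_insert, Finset.mem_singleton] at hy
            rcases hy with rfl | rfl | rfl | rfl
            · exact self_mem_cov
            · exact mem_cov.2 hjw
            · exact hm1
            · exact hm2
          have hc := (Finset.card_le_card hsub).trans (hdeg (jw, x))
          rw [card4ne x w ta tb hxw (hST x hxS ta hta) (hST x hxS tb htb)
            (hST w hwS ta hta) (hST w hwS tb htb) hab] at hc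
          omega
        have hgtc : g tc = g ta ∨ g tc = jw := by
          have hsub2 : ({g ta, jw} : Finset (Fin 5)) ⊆
              Finset.univ \ ((S'.erase w).erase x).image f := by
            intro y hy
            simp only [Finset.mem_insert, Finset.mem_singleton] at hy
            rcases hy with rfl | rfl
            · exact Finset.mem_sdiff.2 ⟨Finset.mem_univ _, hgIm ta hta⟩
            · exact Finset.mem_sdiff.2 ⟨Finset.mem_univ _, hjwIm⟩
          have h2c : ({g ta, jw} : Finset (Fin 5)).card = 2 := by
            rw [Finset.card_insert_of_notMem (by simp [hgtajw]), Finset.card_singleton]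
          have heqs : ({g ta, jw} : Finset (Fin 5)) =
              Finset.univ \ ((S'.erase w).erase x).image f :=
            Finset.eq_of_subset_of_card_le hsub2 (by rw [hcompl, h2c])
          have hmm : g tc ∈ ({g ta, jw} : Finset (Fin 5)) := by
            rw [heqs]
            exact Finset.mem_sdiff.2 ⟨Finset.mem_univ _, hgIm tc htc⟩
          simpa using hmm
        rcases hgtc with he | he
        · exfalso
          have hm1 : ta ∈ cov c (g ta, x) := mem_cov.2 (hgspec ta).symm
          have hm2 : tb ∈ cov c (g ta, x) := mem_cov.2 htbm
          have hm3 : tc ∈ cov c (g ta, x) := mem_cov.2 (by rw [← he]; exact (hgspec tc).symm)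
          have hsub : ({x, ta, tb, tc} : Finset (Fin 8)) ⊆ cov c (g ta, x) := by
            intro y hy
            simp only [Finset.mem_insert, Finset.mem_singleton] at hy
            rcases hy with rfl | rfl | rfl | rfl
            · exact self_mem_cov
            · exact hm1
            · exact hm2
            · exact hm3
          have hc := (Finset.card_le_card hsub).trans (hdeg (g ta, x))
          rw [card4ne x ta tb tc (hST x hxS ta hta) (hST x hxS tb htb) (hST x hxS tc htc)
            hab hac hbc] at hc
          omega
        · refine ⟨tc, htc, ta, tb, jw, g ta, hta, htb, Ne.symm hac, Ne.symm hbc, hab,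
            mem_cov.2 hjw, mem_cov.2 (by rw [← he]; exact (hgspec tc).symm),
            mem_cov.2 (hgspec ta).symm, mem_cov.2 htbm⟩
      by_cases hab : g A = g B
      · exact inner A B C hAT hBT hCT hAB hAC hBC hab
      by_cases hac : g A = g C
      · exact inner A C B hAT hCT hBT hAC hAB (Ne.symm hBC) hac
      by_cases hbc : g B = g C
      · exact inner B C A hBT hCT hAT hBC (Ne.symm hAB) (Ne.symm hAC) hbc
      exfalso
      have hsub3 : ({g A, g B, g C} : Finset (Fin 5)) ⊆
          Finset.univ \ ((S'.erase w).erase x).image f := by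
        intro y hy
        simp only [Finset.mem_insert, Finset.mem_singleton] at hy
        rcases hy with rfl | rfl | rfl
        · exact Finset.mem_sdiff.2 ⟨Finset.mem_univ _, hgIm A hAT⟩
        · exact Finset.mem_sdiff.2 ⟨Finset.mem_univ _, hgIm B hBT⟩
        · exact Finset.mem_sdiff.2 ⟨Finset.mem_univ _, hgIm C hCT⟩
      have hc := Finset.card_le_card hsub3
      rw [card3ne5 (g A) (g B) (g C) hab hac hbc, hcompl] at hc
      omega
    -- pigeonhole over the 4 elements of S'.erase w
    have hMcard : (S'.erase w).card = 4 := by rw [Finset.card_erase_of_mem hwS, hS5]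
    classical
    set fq : Fin 8 → Fin 8 := fun x => if hx : x ∈ S'.erase w then (hQ x hx).choose else A
      with hfqdef
    have hchoose : ∀ x (hx : x ∈ S'.erase w), fq x = (hQ x hx).choose := by
      intro x hx
      rw [hfqdef]
      exact dif_pos hx
    have hfqT : ∀ x ∈ S'.erase w, fq x ∈ T := by
      intro x hx
      rw [hchoose x hx]
      exact (hQ x hx).choose_spec.1
    have hlt : T.card < (S'.erase w).card := by rw [hT3, hMcard]; omega
    obtain ⟨x1, hx1, x2, hx2, hx12, hfeq⟩ :=
      Finset.exists_ne_map_eq_of_card_lt_of_maps_to hlt hfqT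
    have hspec1 := (hQ x1 hx1).choose_spec
    rw [← hchoose x1 hx1] at hspec1
    have hspec2 := (hQ x2 hx2).choose_spec
    rw [← hchoose x2 hx2, ← hfeq] at hspec2
    obtain ⟨hsT, ta1, tb1, j1, j1', hta1T, htb1T, hsta1, hstb1, htab1, hw1, hs1, hta1, htb1⟩ :=
      hspec1
    obtain ⟨-, ta2, tb2, j2, j2', hta2T, htb2T, hsta2, hstb2, htab2, hw2, hs2, hta2, htb2⟩ :=
      hspec2
    have hRcard : ((S'.erase w) \ ({x1, x2} : Finset (Fin 8))).card = 2 := by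
      rw [Finset.card_sdiff_of_subset ?_, hMcard]
      · rw [Finset.card_insert_of_notMem (by simp [hx12]), Finset.card_singleton]
      · intro y hy
        simp only [Finset.mem_insert, Finset.mem_singleton] at hy
        rcases hy with rfl | rfl <;> assumption
    obtain ⟨p, q, hpq⟩ := subset_two8 (le_of_eq hRcard)
    obtain ⟨γ, hpγ, hqγ⟩ := pair_block h p q
    refine hnc ⟨(j1, x1), (j2', x2), γ, fun l => ?_⟩
    by_cases hlT : l ∈ T
    · rcases hTeq (fq x1) ta2 tb2 hsT hta2T htb2T hsta2 hstb2 htab2 l hlT with rfl | rfl | rfl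
      · exact Or.inl hs1
      · exact Or.inr (Or.inl hta2)
      · exact Or.inr (Or.inl htb2)
    · have hlS := (hTS l).2 hlT
      by_cases hlw : l = w
      · subst hlw
        exact Or.inl hw1
      · have hlM : l ∈ S'.erase w := Finset.mem_erase.2 ⟨hlw, hlS⟩
        by_cases hl1 : l = x1
        · subst hl1
          exact Or.inl self_mem_cov
        by_cases hl2 : l = x2
        · subst hl2
          exact Or.inr (Or.inl self_mem_cov)
        · have hlR : l ∈ (S'.erase w) \ ({x1, x2} : Finset (Fin 8)) :=
            Finset.mem_sdiff.2 ⟨hlM, by simp [hl1, hl2]⟩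
          have := hpq hlR
          simp only [Finset.mem_insert, Finset.mem_singleton] at this
          rcases this with rfl | rfl
          · exact Or.inr (Or.inr hpγ)
          · exact Or.inr (Or.inr hqγ)
  · -- TRIANGLE CASE
    push_neg at hstar
    obtain ⟨uA, vA, huA, hvA, huvA, hattA⟩ := attEx A hAT
    obtain ⟨t1, p1, q1, ht1, hp1, hq1, hpq1, hatt1, hp1u, hq1u⟩ := hstar uA huA
    have hmeet1 := hint t1 A p1 q1 uA vA ht1 hAT hp1 hq1 huA hvA hpq1 huvA hatt1 hattA
    obtain ⟨y, hyS, hyu, hyv, hattY⟩ : ∃ y, y ∈ S' ∧ y ≠ uA ∧ y ≠ vA ∧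
        (∃ i, c i t1 = c i vA ∧ c i t1 = c i y) := by
      rcases hmeet1 with hh | hh | hh | hh
      · exact absurd hh hp1u
      · subst hh
        exact ⟨q1, hq1, hq1u, Ne.symm hpq1, hatt1⟩
      · exact absurd hh hq1u
      · subst hh
        obtain ⟨i, hi1, hi2⟩ := hatt1
        exact ⟨p1, hp1, hp1u, hpq1, ⟨i, hi2, hi1⟩⟩
    obtain ⟨t2, p2, q2, ht2, hp2, hq2, hpq2, hatt2, hp2v, hq2v⟩ := hstar vA hvA
    have hmeet2 := hint t2 A p2 q2 uA vA ht2 hAT hp2 hq2 huA hvA hpq2 huvA hatt2 hattA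
    obtain ⟨z', hz'S, hz'u, hz'v, hattZ⟩ : ∃ z', z' ∈ S' ∧ z' ≠ uA ∧ z' ≠ vA ∧
        (∃ i, c i t2 = c i uA ∧ c i t2 = c i z') := by
      rcases hmeet2 with hh | hh | hh | hh
      · subst hh
        exact ⟨q2, hq2, Ne.symm hpq2, hq2v, hatt2⟩
      · exact absurd hh hp2v
      · subst hh
        obtain ⟨i, hi1, hi2⟩ := hatt2
        exact ⟨p2, hp2, hpq2, hp2v, ⟨i, hi2, hi1⟩⟩
      · exact absurd hh hq2v
    have hmeet3 := hint t1 t2 vA y uA z' ht1 ht2 hvA hyS huA hz'S (Ne.symm hyv) (Ne.symm hz'u)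
      hattY hattZ
    have hyz : y = z' := by
      rcases hmeet3 with hh | hh | hh | hh
      · exact absurd hh (Ne.symm huvA)
      · exact absurd hh (Ne.symm hz'v)
      · exact absurd hh hyu
      · exact hh
    subst hyz
    have hKsub : ({uA, vA, y} : Finset (Fin 8)) ⊆ S' := by
      intro x hx
      simp only [Finset.mem_insert, Finset.mem_singleton] at hx
      rcases hx with rfl | rfl | rfl <;> assumption
    have hdcard : (S' \ ({uA, vA, y} : Finset (Fin 8))).card = 2 := by
      rw [Finset.card_sdiff_of_subset hKsub, card3ne uA vA y huvA (Ne.symm hyu) (Ne.symm hyv), hS5]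
    have hdne : (S' \ ({uA, vA, y} : Finset (Fin 8))).Nonempty :=
      Finset.card_pos.1 (by rw [hdcard]; omega)
    obtain ⟨d, hd⟩ := hdne
    have hdS : d ∈ S' := (Finset.mem_sdiff.1 hd).1
    have hdK := (Finset.mem_sdiff.1 hd).2
    simp only [Finset.mem_insert, Finset.mem_singleton] at hdK
    push_neg at hdK
    obtain ⟨hdu, hdv, hdy⟩ := hdK
    have noAttD : ∀ t e, t ∈ T → e ∈ S' → e ≠ d → ¬(∃ i, c i t = c i d ∧ c i t = c i e) := by
      intro t e ht he hed hatt
      have h1 := hint t A d e uA vA ht hAT hdS he huA hvA (Ne.symm hed) huvA hatt hattA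
      have h2 := hint t t1 d e vA y ht ht1 hdS he hvA hyS (Ne.symm hed) (Ne.symm hyv) hatt hattY
      have h3 := hint t t2 d e uA y ht ht2 hdS he huA hyS (Ne.symm hed) (Ne.symm hyu) hatt hattZ
      rcases h1 with hh | hh | hh | hh
      · exact hdu hh
      · exact hdv hh
      · subst hh
        rcases h2 with hh2 | hh2 | hh2 | hh2
        · exact hdv hh2
        · exact hdy hh2
        · exact huvA hh2
        · exact hyu hh2.symm
      · subst hh
        rcases h3 with hh3 | hh3 | hh3 | hh3
        · exact hdu hh3
        · exact hdy hh3
        · exact huvA hh3.symm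
        · exact hyv hh3.symm
    choose fd hfd using (fun m => h d m)
    have hfdinj : Set.InjOn fd (S'.erase d) := by
      intro m hm m' hm' heq
      by_contra hne
      obtain ⟨hmd, hmS⟩ := Finset.mem_erase.1 (Finset.mem_coe.1 hm)
      obtain ⟨hm'd, hm'S⟩ := Finset.mem_erase.1 (Finset.mem_coe.1 hm')
      exact mateNe d hdS (fd m) m m' hmS hm'S hne hmd hm'd (hfd m) (heq ▸ hfd m')
    have hImd : ((S'.erase d).image fd).card = 4 := by
      rw [Finset.card_image_of_injOn hfdinj, Finset.card_erase_of_mem hdS, hS5]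
    have hcompld : ((Finset.univ : Finset (Fin 5)) \ (S'.erase d).image fd).card = 1 := by
      rw [Finset.card_sdiff_of_subset (Finset.subset_univ _), hImd]
      simp
    obtain ⟨jx, hjeq⟩ := Finset.card_eq_one.1 hcompld
    choose gd hgd using (fun t => h t d)
    have hgImd : ∀ t, t ∈ T → gd t ∉ (S'.erase d).image fd := by
      intro t ht hmem
      obtain ⟨m, hm, hfm⟩ := Finset.mem_image.1 hmem
      obtain ⟨hmd, hmS⟩ := Finset.mem_erase.1 hm
      exact noAttD t m ht hmS hmd ⟨gd t, hgd t, (hgd t).trans (hfm ▸ hfd m)⟩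
    have hgall : ∀ t, t ∈ T → gd t = jx := by
      intro t ht
      have hmm : gd t ∈ (Finset.univ : Finset (Fin 5)) \ (S'.erase d).image fd :=
        Finset.mem_sdiff.2 ⟨Finset.mem_univ _, hgImd t ht⟩
      rw [hjeq] at hmm
      simpa using hmm
    have hmA : A ∈ cov c (jx, d) := mem_cov.2 (by rw [← hgall A hAT]; exact (hgd A).symm)
    have hmB : B ∈ cov c (jx, d) := mem_cov.2 (by rw [← hgall B hBT]; exact (hgd B).symm)
    have hmC : C ∈ cov c (jx, d) := mem_cov.2 (by rw [← hgall C hCT]; exact (hgd C).symm)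
    have hsubf : ({d, A, B, C} : Finset (Fin 8)) ⊆ cov c (jx, d) := by
      intro y' hy'
      simp only [Finset.mem_insert, Finset.mem_singleton] at hy'
      rcases hy' with rfl | rfl | rfl | rfl
      · exact self_mem_cov
      · exact hmA
      · exact hmB
      · exact hmC
    have hc := (Finset.card_le_card hsubf).trans (hdeg (jx, d))
    rw [card4ne d A B C (hST d hdS A hAT) (hST d hdS B hBT) (hST d hdS C hCT) hAB hAC hBC] at hc
    omega




theorem core (c : Fin 5 → Fin 8 → β) (h : ∀ k l, ∃ i, c i k = c i l) :
    ∃ b1 b2 b3 : Fin 5 × Fin 8, ∀ l,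
      c b1.1 b1.2 = c b1.1 l ∨ c b2.1 b2.2 = c b2.1 l ∨ c b3.1 b3.2 = c b3.1 l := by
  suffices hgoal : ∃ b1 b2 b3 : Fin 5 × Fin 8, ∀ l,
      l ∈ cov c b1 ∨ l ∈ cov c b2 ∨ l ∈ cov c b3 by
    obtain ⟨b1, b2, b3, hb⟩ := hgoal
    exact ⟨b1, b2, b3, fun l => by simpa [mem_cov] using hb l⟩
  by_cases hΔ : ∃ b, 4 ≤ (cov c b).card
  · obtain ⟨b, hb⟩ := hΔ
    have hcard : (Finset.univ \ cov c b).card ≤ 4 := by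
      rw [Finset.card_sdiff_of_subset (Finset.subset_univ _)]
      simp only [Finset.card_univ, Fintype.card_fin]
      omega
    obtain ⟨k1, k2, k3, k4, hsub⟩ := subset_four8 hcard
    obtain ⟨b1, hk1, hk2⟩ := pair_block h k1 k2
    obtain ⟨b2, hk3, hk4⟩ := pair_block h k3 k4
    refine ⟨b, b1, b2, fun l => ?_⟩
    by_cases hl : l ∈ cov c b
    · exact Or.inl hl
    · have : l ∈ Finset.univ \ cov c b := by simp [hl]
      have := hsub this
      simp only [Finset.mem_insert, Finset.mem_singleton] at this
      rcases this with rfl | rfl | rfl | rfl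
      · exact Or.inr (Or.inl hk1)
      · exact Or.inr (Or.inl hk2)
      · exact Or.inr (Or.inr hk3)
      · exact Or.inr (Or.inr hk4)
  push_neg at hΔ
  have hdeg : ∀ b, (cov c b).card ≤ 3 := fun b => by have := hΔ b; omega
  -- find block of degree 3 at element 0
  have hex3 : ∃ i : Fin 5, 3 ≤ (cov c (i, (0 : Fin 8))).card := by
    by_contra hlow
    push_neg at hlow
    have hsub : (Finset.univ : Finset (Fin 8)) ⊆
        insert 0 (Finset.univ.biUnion (fun i : Fin 5 => (cov c (i, 0)).erase 0)) := by
      intro l _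
      by_cases hl : l = 0
      · simp [hl]
      · obtain ⟨i, hi⟩ := h 0 l
        refine Finset.mem_insert_of_mem (Finset.mem_biUnion.2 ⟨i, Finset.mem_univ _, ?_⟩)
        exact Finset.mem_erase.2 ⟨hl, mem_cov.2 hi⟩
    have hb : (Finset.univ.biUnion (fun i : Fin 5 => (cov c (i, 0)).erase 0)).card ≤ 5 := by
      refine le_trans (Finset.card_biUnion_le) ?_
      refine le_trans (Finset.sum_le_sum (fun i _ => ?_)) (by simp : ∑ _i : Fin 5, 1 ≤ 5)
      have h1 : ((cov c (i, (0:Fin 8))).erase 0).card = (cov c (i, 0)).card - 1 :=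
        Finset.card_erase_of_mem self_mem_cov
      have := hlow i
      omega
    have := Finset.card_le_card hsub
    have hic := Finset.card_insert_le (0 : Fin 8)
      (Finset.univ.biUnion (fun i : Fin 5 => (cov c (i, 0)).erase 0))
    simp only [Finset.card_univ, Fintype.card_fin] at this
    omega
  obtain ⟨i0, hi0⟩ := hex3
  set T := cov c (i0, (0 : Fin 8)) with hTdef
  have hT3 : T.card = 3 := le_antisymm (hdeg _) hi0
  set S' := Finset.univ \ T with hS'def
  have hS5 : S'.card = 5 := by
    rw [hS'def, Finset.card_sdiff_of_subset (Finset.subset_univ _)]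
    simp [hT3]
  by_cases hB2 : ∃ b, 3 ≤ (cov c b ∩ S').card
  · obtain ⟨b, hb⟩ := hB2
    have hR : (S' \ cov c b).card ≤ 2 := by
      have h1 := Finset.card_sdiff_add_card_inter S' (cov c b)
      have h2 : (S' ∩ cov c b).card = (cov c b ∩ S').card := by rw [Finset.inter_comm]
      omega
    obtain ⟨u, v, hsub⟩ := subset_two8 hR
    obtain ⟨γ, hu, hv⟩ := pair_block h u v
    refine ⟨(i0, 0), b, γ, fun l => ?_⟩
    by_cases hl : l ∈ T
    · exact Or.inl hl
    · have hlS : l ∈ S' := by simp [hS'def, hl]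
      by_cases hlb : l ∈ cov c b
      · exact Or.inr (Or.inl hlb)
      · have : l ∈ S' \ cov c b := Finset.mem_sdiff.2 ⟨hlS, hlb⟩
        have := hsub this
        simp only [Finset.mem_insert, Finset.mem_singleton] at this
        rcases this with rfl | rfl
        · exact Or.inr (Or.inr hu)
        · exact Or.inr (Or.inr hv)
  push_neg at hB2
  exact deep h i0 T S' hTdef hS'def hT3 hS5 hdeg (fun b => by have := hB2 b; omega)

end Core

lemma lower (m : ℕ) (hm : HasConfig 5 m) : 9 ≤ m := by
  by_contra hlt
  push_neg at hlt
  obtain ⟨V, p, E, hrp, hins, hcard, hcov⟩ := hm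
  classical
  rcases Finset.eq_empty_or_nonempty E with rfl | ⟨e0, he0⟩
  · have := hcov ∅ (fun e he => absurd he (Finset.notMem_empty e))
    simp at this
  have hm8 : m ≤ 8 := by omega
  have hlen : E.toList.length = m := by rw [Finset.length_toList, hcard]
  set g : Fin 8 → Finset V := fun k => E.toList.getD k e0 with hgdef
  have hgE : ∀ k, g k ∈ E := by
    intro k
    rw [hgdef]
    show E.toList.getD (↑k) e0 ∈ E
    by_cases hk : (k : ℕ) < E.toList.length
    · simp only [List.getD_eq_getElem _ _ hk]
      exact Finset.mem_toList.1 (List.getElem_mem hk)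
    · push_neg at hk
      rw [List.getD_eq_default _ _ hk]
      exact he0
  have hsurj : ∀ e ∈ E, ∃ k : Fin 8, g k = e := by
    intro e he
    obtain ⟨n, hn, hne⟩ := List.mem_iff_getElem.1 (Finset.mem_toList.2 he)
    have hn8 : n < 8 := by rw [hlen] at hn; omega
    refine ⟨⟨n, hn8⟩, ?_⟩
    rw [hgdef]
    show E.toList.getD ((⟨n, hn8⟩ : Fin 8) : ℕ) e0 = e
    have hco : ((⟨n, hn8⟩ : Fin 8) : ℕ) = n := rfl
    rw [hco, List.getD_eq_getElem _ _ hn]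
    exact hne
  have hpick : ∀ (i : Fin 5) (k : Fin 8), ∃ v, (v ∈ g k ∧ p v = i) ∧
      ∀ y, (y ∈ g k ∧ p y = i) → y = v := by
    intro i k
    obtain ⟨v, hv, huniq⟩ := hrp (g k) (hgE k) i
    exact ⟨v, hv, huniq⟩
  choose vx hvx huniq using hpick
  have hpair : ∀ k l : Fin 8, ∃ i, vx i k = vx i l := by
    intro k l
    obtain ⟨u, hu1, hu2⟩ := hins (g k) (hgE k) (g l) (hgE l)
    refine ⟨p u, ?_⟩
    rw [← huniq (p u) k u ⟨hu1, rfl⟩, ← huniq (p u) l u ⟨hu2, rfl⟩]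
  obtain ⟨b1, b2, b3, hb⟩ := Core.core (fun i k => vx i k) hpair
  set C : Finset V := {vx b1.1 b1.2, vx b2.1 b2.2, vx b3.1 b3.2} with hC
  have hCcov : IsCover E C := by
    intro e he
    obtain ⟨l, rfl⟩ := hsurj e he
    rcases hb l with hh | hh | hh
    · exact ⟨vx b1.1 b1.2, by simp [hC], by rw [hh]; exact (hvx b1.1 l).1⟩
    · exact ⟨vx b2.1 b2.2, by simp [hC], by rw [hh]; exact (hvx b2.1 l).1⟩
    · exact ⟨vx b3.1 b3.2, by simp [hC], by rw [hh]; exact (hvx b3.1 l).1⟩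
  have h4 := hcov C hCcov
  have hC3 : C.card ≤ 3 := by
    rw [hC]
    refine (Finset.card_insert_le _ _).trans (Nat.succ_le_succ ?_)
    exact (Finset.card_insert_le _ _).trans (Nat.succ_le_succ (by simp))
  omega

theorem stmt13 : f 5 = 9 := by
  have hmem : 9 ∈ {m | HasConfig 5 m} := Constr.hasConfig9
  apply le_antisymm
  · exact Nat.sInf_le hmem
  · exact le_csInf ⟨9, hmem⟩ (fun m hm => lower m hm)
end

section
/- There is no 6-partite intersecting hypergraph with exactly 11 edges and cover number at least 5; hence f(6) ≥ 12. -/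
set_option linter.unusedSectionVars false

lemma Intersecting.subset {V : Type*} {E E' : Finset (Finset V)}
    (hI : Intersecting E) (h : E' ⊆ E) : Intersecting E' :=
  fun e he f hf => hI e (h he) f (h hf)

/-- Pairing lemma: an intersecting family with at most `2k` edges has a cover of size `≤ k`. -/
lemma pairing {V : Type*} [DecidableEq V] :
    ∀ (k : ℕ) (E : Finset (Finset V)), Intersecting E → E.card ≤ 2 * k →
      ∃ C : Finset V, IsCover E C ∧ C.card ≤ k := by
  intro k
  induction k with
  | zero =>
    intro E hI hc
    simp only [Nat.mul_zero, Nat.le_zero, Finset.card_eq_zero] at hc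
    subst hc
    exact ⟨∅, fun e he => absurd he (Finset.notMem_empty e), le_refl 0⟩
  | succ k ih =>
    intro E hI hc
    rcases E.eq_empty_or_nonempty with rfl | ⟨e, he⟩
    · exact ⟨∅, fun e he => absurd he (Finset.notMem_empty e), Nat.zero_le _⟩
    by_cases hf : ∃ f ∈ E, f ≠ e
    · obtain ⟨f, hfE, hfe⟩ := hf
      obtain ⟨v, hve, hvf⟩ := hI e he f hfE
      set E' := E.filter (fun g => v ∉ g) with hE'
      have hsub : E' ⊆ (E.erase e).erase f := by
        intro g hg
        rw [Finset.mem_filter] at hg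
        refine Finset.mem_erase.2 ⟨?_, Finset.mem_erase.2 ⟨?_, hg.1⟩⟩
        · rintro rfl; exact hg.2 hvf
        · rintro rfl; exact hg.2 hve
      have hcard : E'.card ≤ 2 * k := by
        have h1 : ((E.erase e).erase f).card ≤ E.card - 2 := by
          have hfe' : f ∈ E.erase e := Finset.mem_erase.2 ⟨hfe, hfE⟩
          rw [Finset.card_erase_of_mem hfe', Finset.card_erase_of_mem he]
          omega
        have := Finset.card_le_card hsub
        omega
      obtain ⟨C, hC, hCc⟩ := ih E' (hI.subset (Finset.filter_subset _ _)) hcard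
      refine ⟨insert v C, ?_, ?_⟩
      · intro g hg
        by_cases hvg : v ∈ g
        · exact ⟨v, Finset.mem_insert_self v C, hvg⟩
        · obtain ⟨u, huC, hug⟩ := hC g (Finset.mem_filter.2 ⟨hg, hvg⟩)
          exact ⟨u, Finset.mem_insert_of_mem huC, hug⟩
      · calc (insert v C).card ≤ C.card + 1 := Finset.card_insert_le v C
          _ ≤ k + 1 := by omega
    · push_neg at hf
      obtain ⟨v, hv, -⟩ := hI e he e he
      refine ⟨{v}, ?_, by simp⟩
      intro g hg
      rw [hf g hg]
      exact ⟨v, Finset.mem_singleton_self v, hv⟩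


section Counting
variable {V : Type*} [DecidableEq V] {r : ℕ} {p : V → Fin r} {E : Finset (Finset V)}

/-- each edge has exactly one vertex in class `i` -/
lemma class_filter_card (hR : Rpartite r p E) {e : Finset V} (he : e ∈ E) (i : Fin r) :
    (e.filter (fun v => p v = i)).card = 1 := by
  obtain ⟨u, ⟨hu, hpu⟩, huniq⟩ := hR e he i
  rw [Finset.card_eq_one]
  refine ⟨u, ?_⟩
  ext w
  simp only [Finset.mem_filter, Finset.mem_singleton]
  constructor
  · intro hw; exact huniq w hw
  · rintro rfl; exact ⟨hu, hpu⟩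

lemma edge_card (hR : Rpartite r p E) {e : Finset V} (he : e ∈ E) : e.card = r := by
  have h := Finset.card_eq_sum_card_fiberwise
    (f := p) (s := e) (t := Finset.univ) (fun x _ => Finset.mem_univ _)
  rw [h]
  rw [Finset.sum_congr rfl (fun i _ => class_filter_card hR he i)]
  simp

/-- swap lemma for degree sums -/
lemma sum_deg_eq (E : Finset (Finset V)) (A : Finset V) :
    ∑ v ∈ A, degree E v = ∑ e ∈ E, (A.filter (fun v => v ∈ e)).card := by
  unfold degree
  simp only [Finset.card_filter]
  exact Finset.sum_comm

lemma sum_deg_univ (hR : Rpartite r p E) :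
    ∑ v ∈ E.biUnion id, degree E v = E.card * r := by
  rw [sum_deg_eq]
  rw [Finset.sum_congr rfl (fun e he => ?_), Finset.sum_const, smul_eq_mul]
  have : (E.biUnion id).filter (fun v => v ∈ e) = e := by
    ext v
    simp only [Finset.mem_filter, Finset.mem_biUnion, id]
    exact ⟨fun h => h.2, fun h => ⟨⟨e, he, h⟩, h⟩⟩
  rw [this, edge_card hR he]

lemma sum_deg_class (hR : Rpartite r p E) (i : Fin r) :
    ∑ v ∈ (E.biUnion id).filter (fun v => p v = i), degree E v = E.card := by
  rw [sum_deg_eq]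
  rw [Finset.sum_congr rfl (fun e he => ?_), Finset.sum_const, smul_eq_mul, mul_one]
  have : ((E.biUnion id).filter (fun v => p v = i)).filter (fun v => v ∈ e)
      = e.filter (fun v => p v = i) := by
    ext v
    simp only [Finset.mem_filter, Finset.mem_biUnion, id]
    constructor
    · rintro ⟨⟨-, hp⟩, hv⟩; exact ⟨hv, hp⟩
    · rintro ⟨hv, hp⟩; exact ⟨⟨⟨e, he, hv⟩, hp⟩, hv⟩
  rw [this, class_filter_card hR he]

/-- double counting intersecting pairs -/
lemma pair_count (hI : Intersecting E) :
    E.card * E.card - E.card ≤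
      ∑ v ∈ E.biUnion id, (degree E v * degree E v - degree E v) := by
  rcases Finset.eq_empty_or_nonempty E.offDiag with hemp | ⟨⟨e0, f0⟩, hef0⟩
  · have : E.card * E.card - E.card = 0 := by
      rw [← Finset.offDiag_card, hemp]; simp
    omega
  · rw [Finset.mem_offDiag] at hef0
    obtain ⟨v0, hv0, -⟩ := hI e0 hef0.1 f0 hef0.2.1
    set φ : Finset V × Finset V → V := fun pr =>
      if h : (pr.1 ∩ pr.2).Nonempty then h.choose else v0 with hφ
    have hmem : ∀ pr ∈ E.offDiag, φ pr ∈ E.biUnion id := by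
      rintro ⟨e, f⟩ hpr
      rw [Finset.mem_offDiag] at hpr
      obtain ⟨w, hwe, hwf⟩ := hI e hpr.1 f hpr.2.1
      have hne : ((e, f).1 ∩ (e, f).2).Nonempty := ⟨w, Finset.mem_inter.2 ⟨hwe, hwf⟩⟩
      have := hne.choose_spec
      rw [Finset.mem_inter] at this
      simp only [hφ, dif_pos hne]
      exact Finset.mem_biUnion.2 ⟨e, hpr.1, this.1⟩
    have hcard := Finset.card_eq_sum_card_fiberwise hmem
    rw [Finset.offDiag_card] at hcard
    rw [hcard]
    apply Finset.sum_le_sum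
    intro v hv
    have hsub : E.offDiag.filter (fun pr => φ pr = v) ⊆ (E.filter (fun e => v ∈ e)).offDiag := by
      rintro ⟨e, f⟩ hpr
      rw [Finset.mem_filter, Finset.mem_offDiag] at hpr
      obtain ⟨⟨he, hf, hef⟩, hfib⟩ := hpr
      obtain ⟨w, hwe, hwf⟩ := hI e he f hf
      have hne : ((e, f).1 ∩ (e, f).2).Nonempty := ⟨w, Finset.mem_inter.2 ⟨hwe, hwf⟩⟩
      have hspec := hne.choose_spec
      rw [Finset.mem_inter] at hspec
      have : φ (e, f) ∈ e ∧ φ (e, f) ∈ f := by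
        simp only [hφ, dif_pos hne]; exact hspec
      rw [hfib] at this
      exact Finset.mem_offDiag.2 ⟨Finset.mem_filter.2 ⟨he, this.1⟩,
        Finset.mem_filter.2 ⟨hf, this.2⟩, hef⟩
    calc (E.offDiag.filter (fun pr => φ pr = v)).card
        ≤ (E.filter (fun e => v ∈ e)).offDiag.card := Finset.card_le_card hsub
      _ = degree E v * degree E v - degree E v := by rw [Finset.offDiag_card]; rfl
end Counting


section Main
variable {V : Type*} [DecidableEq V] {p : V → Fin 6} {E : Finset (Finset V)}

/-- 7 or more edges force a vertex of degree at least 3. -/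
lemma lemK {p : V → Fin 6} (hR : Rpartite 6 p E) (hI : Intersecting E)
    (h7 : 7 ≤ E.card) : ∃ v, 3 ≤ degree E v := by
  by_contra hcon
  push_neg at hcon
  set n := E.card with hn
  set V' := E.biUnion id with hV'
  set S := V'.filter (fun v => degree E v = 2) with hS
  -- pair count lower bound
  have h1 : n * n - n ≤ ∑ v ∈ V', (degree E v * degree E v - degree E v) := pair_count hI
  have h2 : ∑ v ∈ V', (degree E v * degree E v - degree E v) ≤ 2 * S.card := by
    have : ∀ v ∈ V', degree E v * degree E v - degree E v
        ≤ (if degree E v = 2 then 2 else 0) := by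
      intro v hv
      have := hcon v
      interval_cases h : degree E v <;> simp
    calc ∑ v ∈ V', (degree E v * degree E v - degree E v)
        ≤ ∑ v ∈ V', (if degree E v = 2 then 2 else 0) := Finset.sum_le_sum this
      _ = ∑ v ∈ S, 2 := (Finset.sum_filter _ _).symm
      _ = 2 * S.card := by rw [Finset.sum_const, smul_eq_mul, mul_comm]
  -- per-class bound on S
  have hSi : ∀ i : Fin 6, 2 * (S.filter (fun v => p v = i)).card ≤ n := by
    intro i
    have hsub : S.filter (fun v => p v = i) ⊆ V'.filter (fun v => p v = i) := by
      intro v hv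
      rw [Finset.mem_filter] at hv ⊢
      rw [hS, Finset.mem_filter] at hv
      exact ⟨hv.1.1, hv.2⟩
    calc 2 * (S.filter (fun v => p v = i)).card
        = ∑ v ∈ S.filter (fun v => p v = i), 2 := by
          rw [Finset.sum_const, smul_eq_mul, mul_comm]
      _ = ∑ v ∈ S.filter (fun v => p v = i), degree E v := by
          apply Finset.sum_congr rfl
          intro v hv
          rw [Finset.mem_filter, hS, Finset.mem_filter] at hv
          omega
      _ ≤ ∑ v ∈ V'.filter (fun v => p v = i), degree E v :=
          Finset.sum_le_sum_of_subset hsub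
      _ = n := sum_deg_class hR i
  have hSsum : S.card = ∑ i : Fin 6, (S.filter (fun v => p v = i)).card :=
    Finset.card_eq_sum_card_fiberwise (fun x _ => Finset.mem_univ _)
  -- first round: n ≤ 7
  have h3 : 2 * S.card ≤ 6 * n := by
    rw [hSsum, Finset.mul_sum]
    calc ∑ i : Fin 6, 2 * (S.filter (fun v => p v = i)).card
        ≤ ∑ _i : Fin 6, n := Finset.sum_le_sum (fun i _ => hSi i)
      _ = 6 * n := by simp [Finset.sum_const, mul_comm]
  have hn7 : n = 7 := by
    have h0 : 0 < n := by omega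
    have hle : n * n ≤ 7 * n := by omega
    have := Nat.le_of_mul_le_mul_right hle h0
    omega
  -- second round: exact bound
  have h4 : S.card ≤ 18 := by
    have : ∀ i : Fin 6, (S.filter (fun v => p v = i)).card ≤ 3 := by
      intro i; have := hSi i; omega
    rw [hSsum]
    calc ∑ i : Fin 6, (S.filter (fun v => p v = i)).card
        ≤ ∑ _i : Fin 6, 3 := Finset.sum_le_sum (fun i _ => this i)
      _ = 18 := by simp
  have h49 : n * n = 49 := by rw [hn7]
  omega

lemma Rpartite.subset {V : Type*} {r : ℕ} {p : V → Fin r} {E E' : Finset (Finset V)}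
    (hR : Rpartite r p E) (h : E' ⊆ E) : Rpartite r p E' :=
  fun e he => hR e (h he)

lemma deg_split (E : Finset (Finset V)) (v : V) :
    degree E v + (E.filter (fun e => v ∉ e)).card = E.card := by
  unfold degree
  exact Finset.card_filter_add_card_filter_not _

lemma cover_succ {E : Finset (Finset V)} {v : V} {C : Finset V} {k : ℕ}
    (hC : IsCover (E.filter (fun e => v ∉ e)) C) (hk : C.card ≤ k) :
    IsCover E (insert v C) ∧ (insert v C).card ≤ k + 1 := by
  constructor
  · intro e he
    by_cases hv : v ∈ e
    · exact ⟨v, Finset.mem_insert_self v C, hv⟩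
    · obtain ⟨u, huC, hue⟩ := hC e (Finset.mem_filter.2 ⟨he, hv⟩)
      exact ⟨u, Finset.mem_insert_of_mem huC, hue⟩
  · calc (insert v C).card ≤ C.card + 1 := Finset.card_insert_le v C
      _ ≤ k + 1 := by omega

/-- a 6-partite intersecting family with at most 7 edges has a 3-cover. -/
lemma cover3 (hR : Rpartite 6 p E) (hI : Intersecting E) (h : E.card ≤ 7) :
    ∃ C : Finset V, IsCover E C ∧ C.card ≤ 3 := by
  by_cases h6 : E.card ≤ 6
  · exact pairing 3 E hI (by omega)
  · obtain ⟨v, hv⟩ := lemK hR hI (by omega)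
    have hsplit := deg_split E v
    obtain ⟨C, hC, hCc⟩ := pairing 2 (E.filter (fun e => v ∉ e))
      (hI.subset (Finset.filter_subset _ _)) (by omega)
    obtain ⟨h1, h2⟩ := cover_succ hC hCc
    exact ⟨insert v C, h1, h2⟩

/-- Main lemma: a 6-partite intersecting family with at most 11 edges has a 4-cover. -/
lemma main_cover (hR : Rpartite 6 p E) (hI : Intersecting E) (h : E.card ≤ 11) :
    ∃ C : Finset V, IsCover E C ∧ C.card ≤ 4 := by
  by_cases h8 : E.card ≤ 8
  · exact pairing 4 E hI (by omega)
  by_cases h4 : ∃ v, 4 ≤ degree E v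
  · obtain ⟨v, hv⟩ := h4
    have hsplit := deg_split E v
    obtain ⟨C, hC, hCc⟩ := cover3 (E := E.filter (fun e => v ∉ e)) (hR.subset (Finset.filter_subset _ _))
      (hI.subset (Finset.filter_subset _ _)) (by omega)
    obtain ⟨h1, h2⟩ := cover_succ hC hCc
    exact ⟨insert v C, h1, h2⟩
  push_neg at h4
  by_cases h10 : E.card ≤ 10
  · obtain ⟨v, hv⟩ := lemK hR hI (by omega)
    have hsplit := deg_split E v
    obtain ⟨C, hC, hCc⟩ := cover3 (E := E.filter (fun e => v ∉ e)) (hR.subset (Finset.filter_subset _ _))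
      (hI.subset (Finset.filter_subset _ _)) (by omega)
    obtain ⟨h1, h2⟩ := cover_succ hC hCc
    exact ⟨insert v C, h1, h2⟩
  -- the hard case: exactly 11 edges, max degree 3
  have h11 : E.card = 11 := by omega
  set V' := E.biUnion id with hV'
  set T := V'.filter (fun v => degree E v = 3) with hT
  -- at least 15 vertices of degree 3
  have hTcard : 15 ≤ T.card := by
    have h1 : 110 ≤ ∑ v ∈ V', (degree E v * degree E v - degree E v) := by
      have := pair_count hI
      rw [h11] at this
      exact this
    have h2 : ∑ v ∈ V', (degree E v * degree E v - degree E v)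
        ≤ (∑ v ∈ V', degree E v) + 3 * T.card := by
      have hpt : ∀ v ∈ V', degree E v * degree E v - degree E v
          ≤ degree E v + (if degree E v = 3 then 3 else 0) := by
        intro v hv
        have := h4 v
        interval_cases h : degree E v <;> simp
      calc ∑ v ∈ V', (degree E v * degree E v - degree E v)
          ≤ ∑ v ∈ V', (degree E v + (if degree E v = 3 then 3 else 0)) :=
            Finset.sum_le_sum hpt
        _ = (∑ v ∈ V', degree E v) + ∑ v ∈ V', (if degree E v = 3 then 3 else 0) :=
            Finset.sum_add_distrib
        _ = (∑ v ∈ V', degree E v) + ∑ v ∈ T, 3 := by rw [Finset.sum_filter]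
        _ = (∑ v ∈ V', degree E v) + 3 * T.card := by
            rw [Finset.sum_const, smul_eq_mul, mul_comm]
    have h3 : ∑ v ∈ V', degree E v = 66 := by
      rw [hV', sum_deg_univ hR, h11]
    omega
  -- some class contains three degree-3 vertices
  have hclass : ∃ i : Fin 6, 3 ≤ (T.filter (fun v => p v = i)).card := by
    by_contra hcon
    push_neg at hcon
    have : T.card = ∑ i : Fin 6, (T.filter (fun v => p v = i)).card :=
      Finset.card_eq_sum_card_fiberwise (fun x _ => Finset.mem_univ _)
    have hle : ∑ i : Fin 6, (T.filter (fun v => p v = i)).card ≤ ∑ _i : Fin 6, 2 :=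
      Finset.sum_le_sum (fun i _ => by have := hcon i; omega)
    simp at hle
    omega
  obtain ⟨i, hi⟩ := hclass
  obtain ⟨W, hWsub, hWcard⟩ := Finset.exists_subset_card_eq hi
  have hWT : ∀ v ∈ W, degree E v = 3 ∧ p v = i := by
    intro v hv
    have h1 := hWsub hv
    rw [Finset.mem_filter] at h1
    have h2 := h1.1
    rw [hT, Finset.mem_filter] at h2
    exact ⟨h2.2, h1.2⟩
  -- the edge sets of the three vertices are pairwise disjoint
  have hdisj : ∀ v ∈ W, ∀ w ∈ W, v ≠ w →
      Disjoint (E.filter (fun e => v ∈ e)) (E.filter (fun e => w ∈ e)) := by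
    intro v hv w hw hvw
    rw [Finset.disjoint_left]
    intro e hev hew
    rw [Finset.mem_filter] at hev hew
    obtain ⟨u, -, huniq⟩ := hR e hev.1 i
    have h1 : v = u := huniq v ⟨hev.2, (hWT v hv).2⟩
    have h2 : w = u := huniq w ⟨hew.2, (hWT w hw).2⟩
    exact hvw (h1.trans h2.symm)
  set EW := W.biUnion (fun v => E.filter (fun e => v ∈ e)) with hEW
  have hEWcard : EW.card = 9 := by
    rw [hEW, Finset.card_biUnion hdisj]
    calc ∑ v ∈ W, (E.filter (fun e => v ∈ e)).card
        = ∑ v ∈ W, 3 := Finset.sum_congr rfl (fun v hv => (hWT v hv).1)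
      _ = 9 := by rw [Finset.sum_const, hWcard]; rfl
  have hEWsub : EW ⊆ E := by
    rw [hEW]
    intro e he
    rw [Finset.mem_biUnion] at he
    obtain ⟨v, -, he⟩ := he
    exact (Finset.mem_filter.1 he).1
  set R := E.filter (fun e => ∀ v ∈ W, v ∉ e) with hRdef
  have hReq : R = E \ EW := by
    ext e
    rw [hRdef, Finset.mem_filter, Finset.mem_sdiff, hEW, Finset.mem_biUnion]
    constructor
    · rintro ⟨he, hall⟩
      refine ⟨he, ?_⟩
      rintro ⟨v, hv, hef⟩
      exact hall v hv (Finset.mem_filter.1 hef).2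
    · rintro ⟨he, hnot⟩
      refine ⟨he, fun v hv hve => hnot ⟨v, hv, Finset.mem_filter.2 ⟨he, hve⟩⟩⟩
  have hRcard : R.card = 2 := by
    rw [hReq, Finset.card_sdiff_of_subset hEWsub, hEWcard, h11]
  obtain ⟨CR, hCR, hCRc⟩ := pairing 1 R (hI.subset (Finset.filter_subset _ _)) (by omega)
  refine ⟨W ∪ CR, ?_, ?_⟩
  · intro e he
    by_cases hx : ∃ v ∈ W, v ∈ e
    · obtain ⟨v, hv, hve⟩ := hx
      exact ⟨v, Finset.mem_union_left _ hv, hve⟩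
    · push_neg at hx
      obtain ⟨u, huC, hue⟩ := hCR e (Finset.mem_filter.2 ⟨he, hx⟩)
      exact ⟨u, Finset.mem_union_right _ huC, hue⟩
  · calc (W ∪ CR).card ≤ W.card + CR.card := Finset.card_union_le _ _
      _ ≤ 4 := by omega
end Main

abbrev Vc : Type := (ZMod 5 × ZMod 5) ⊕ ZMod 5

def pc : Vc → Fin 6 :=
  Sum.elim (fun xy => ⟨(xy.1).val, by have := (xy.1).val_lt; omega⟩) (fun _ => ⟨5, by norm_num⟩)

def edgec (a b : ZMod 5) : Finset Vc :=
  insert (Sum.inr a) ((Finset.univ : Finset (ZMod 5)).image (fun x => Sum.inl (x, a*x+b)))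

def Ec : Finset (Finset Vc) :=
  Finset.image (fun ab : ZMod 5 × ZMod 5 => edgec ab.1 ab.2) Finset.univ

lemma mem_edgec {v : Vc} {a b : ZMod 5} :
    v ∈ edgec a b ↔ v = Sum.inr a ∨ ∃ x : ZMod 5, v = Sum.inl (x, a*x+b) := by
  simp [edgec, eq_comm]

lemma mem_Ec {e : Finset Vc} : e ∈ Ec ↔ ∃ a b : ZMod 5, e = edgec a b := by
  simp [Ec, eq_comm]

instance : Fact (Nat.Prime 5) := ⟨by norm_num⟩

lemma intersecting_Ec : Intersecting Ec := by
  intro e he f hf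
  obtain ⟨a, b, rfl⟩ := mem_Ec.1 he
  obtain ⟨a', b', rfl⟩ := mem_Ec.1 hf
  by_cases hab : a = a'
  · subst hab
    exact ⟨Sum.inr a, mem_edgec.2 (Or.inl rfl), mem_edgec.2 (Or.inl rfl)⟩
  · set x : ZMod 5 := (b' - b) / (a - a') with hx
    have hsub : a - a' ≠ 0 := sub_ne_zero.2 hab
    have hkey : a * x + b = a' * x + b' := by
      have h1 : (a - a') * x = b' - b := by
        rw [hx, mul_div_cancel₀ _ hsub]
      have h2 : (a - a') * x = a * x - a' * x := by ring
      have h3 : a * x - a' * x = b' - b := by rw [← h2, h1]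
      linear_combination h3
    refine ⟨Sum.inl (x, a * x + b), mem_edgec.2 (Or.inr ⟨x, rfl⟩), mem_edgec.2 (Or.inr ⟨x, ?_⟩)⟩
    rw [hkey]

lemma rpartite_Ec : Rpartite 6 pc Ec := by
  intro e he i
  obtain ⟨a, b, rfl⟩ := mem_Ec.1 he
  by_cases hi : (i : ℕ) = 5
  · refine ⟨Sum.inr a, ⟨mem_edgec.2 (Or.inl rfl), ?_⟩, ?_⟩
    · simp [pc]; exact (Fin.ext hi).symm
    · rintro w ⟨hw, hpw⟩
      rcases mem_edgec.1 hw with h | ⟨x, rfl⟩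
      · exact h
      · exfalso
        simp only [pc, Sum.elim_inl] at hpw
        have hxv : x.val = (i : ℕ) := congrArg Fin.val hpw
        have := x.val_lt
        omega
  · have hi5 : (i : ℕ) < 5 := by have := i.isLt; omega
    set x0 : ZMod 5 := ((i : ℕ) : ZMod 5) with hx0
    have hval : x0.val = (i : ℕ) := ZMod.val_cast_of_lt hi5
    refine ⟨Sum.inl (x0, a * x0 + b), ⟨mem_edgec.2 (Or.inr ⟨x0, rfl⟩), ?_⟩, ?_⟩
    · simp [pc]
      exact Fin.ext hval
    · rintro w ⟨hw, hpw⟩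
      rcases mem_edgec.1 hw with rfl | ⟨x, rfl⟩
      · exfalso; simp [pc] at hpw
        rw [← hpw] at hi; exact hi rfl
      · simp only [pc, Sum.elim_inl] at hpw
        have hxv : x.val = (i : ℕ) := congrArg Fin.val hpw
        have : x = x0 := by
          have : x.val = x0.val := by rw [hxv, hval]
          exact ZMod.val_injective 5 this
        rw [this]

set_option maxRecDepth 10000 in
lemma card_Ec : Ec.card = 25 := by decide

lemma cover_Ec (C : Finset Vc) (hC : IsCover Ec C) : 5 ≤ C.card := by
  by_contra hlt
  push_neg at hlt
  -- some slope point is not in C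
  have hslope : ∃ a : ZMod 5, Sum.inr a ∉ C := by
    by_contra hall
    push_neg at hall
    have : (Finset.univ.image (fun a : ZMod 5 => (Sum.inr a : Vc))) ⊆ C := by
      intro v hv
      obtain ⟨a, -, rfl⟩ := Finset.mem_image.1 hv
      exact hall a
    have hcard := Finset.card_le_card this
    rw [Finset.card_image_of_injective _ (fun a a' h => by injection h)] at hcard
    simp at hcard
    omega
  obtain ⟨a, ha⟩ := hslope
  -- for each b, pick a cover vertex of edge a b; it is a grid vertex determining b
  have hpick : ∀ b : ZMod 5, ∃ v ∈ C, v ∈ edgec a b := by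
    intro b
    exact hC (edgec a b) (mem_Ec.2 ⟨a, b, rfl⟩)
  choose g hgC hge using hpick
  have hginj : Function.Injective g := by
    intro b b' hbb
    rcases mem_edgec.1 (hge b) with h | ⟨x, hx⟩
    · exact absurd (h ▸ hgC b) ha
    · rcases mem_edgec.1 (hge b') with h' | ⟨x', hx'⟩
      · exact absurd (h' ▸ hgC b') ha
      · have h2 : (Sum.inl (x, a*x+b) : Vc) = Sum.inl (x', a*x'+b') :=
          hx.symm.trans (hbb.trans hx')
        injection h2 with h3
        have hxe : x = x' := congrArg Prod.fst h3
        have hye : a * x + b = a * x' + b' := congrArg Prod.snd h3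
        rw [← hxe] at hye
        exact add_left_cancel hye
  have : (Finset.univ.image g).card ≤ C.card :=
    Finset.card_le_card (fun v hv => by
      obtain ⟨b, -, rfl⟩ := Finset.mem_image.1 hv; exact hgC b)
  rw [Finset.card_image_of_injective _ hginj] at this
  simp at this
  omega

theorem stmt14 :
    (∀ (V : Type*) (p : V → Fin 6) (E : Finset (Finset V)),
      Rpartite 6 p E → Intersecting E → E.card = 11 →
      ∃ C : Finset V, IsCover E C ∧ C.card ≤ 4) ∧
    12 ≤ f 6 := by
  constructor
  · intro V p E hR hI hcard
    classical
    exact main_cover hR hI (by omega)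
  · have hmem : HasConfig 6 25 :=
      ⟨Vc, pc, Ec, rpartite_Ec, intersecting_Ec, card_Ec, fun C hC => cover_Ec C hC⟩
    have hne : Set.Nonempty {m | HasConfig 6 m} := ⟨25, hmem⟩
    unfold f
    apply le_csInf hne
    rintro m ⟨V, p, E, hR, hI, hcard, hcov⟩
    by_contra hlt
    push_neg at hlt
    classical
    obtain ⟨C, hC, hCc⟩ := main_cover hR hI (by omega)
    have := hcov C hC
    omega
end

section
/- Let H be a 6-partite intersecting hypergraph with 11 edges and τ(H) ≥ 5. Then no vertex has degree ≥ 5, each vertex class has at most one vertex of degree 4 and at most two vertices of degree 3, and no class contains both a vertex of degree 4 and a vertex of degree 3. Consequently, writing x_i for the number of vertices of degree i, we have x_3 + 3x_4 ≤ 18. -/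
/-- Any `2n` edges of an intersecting hypergraph can be covered by `n` vertices:
pair the edges up and pick a common vertex of each pair. -/
lemma cover_half {V : Type*} [DecidableEq V] (E : Finset (Finset V))
    (hint : Intersecting E) :
    ∀ n (S : Finset (Finset V)), S ⊆ E → S.card ≤ 2 * n →
      ∃ C : Finset V, C.card ≤ n ∧ ∀ e ∈ S, ∃ v ∈ C, v ∈ e := by
  intro n
  induction n with
  | zero =>
    intro S hS hc
    have : S = ∅ := Finset.card_eq_zero.mp (Nat.le_zero.mp hc)
    subst this
    exact ⟨∅, le_rfl, by simp⟩
  | succ n ih =>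
    intro S hS hc
    rcases S.eq_empty_or_nonempty with rfl | ⟨e, he⟩
    · exact ⟨∅, by simp, by simp⟩
    rcases (S.erase e).eq_empty_or_nonempty with h1 | ⟨f, hf⟩
    · obtain ⟨w, hw, _⟩ := hint e (hS he) e (hS he)
      refine ⟨{w}, by simp, ?_⟩
      intro g hg
      have hge : g = e := by
        by_contra hne
        exact absurd (Finset.mem_erase.mpr ⟨hne, hg⟩) (by simp [h1])
      exact ⟨w, by simp, hge ▸ hw⟩
    · have hfS : f ∈ S := Finset.mem_of_mem_erase hf
      obtain ⟨w, hwe, hwf⟩ := hint e (hS he) f (hS hfS)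
      set S' := (S.erase e).erase f with hS'
      have hsub : S' ⊆ E := fun g hg =>
        hS (Finset.mem_of_mem_erase (Finset.mem_of_mem_erase hg))
      have hcard : S'.card ≤ 2 * n := by
        have h1 : (S.erase e).card = S.card - 1 := Finset.card_erase_of_mem he
        have h2 : S'.card = (S.erase e).card - 1 := Finset.card_erase_of_mem hf
        have h3 : 1 ≤ S.card := Finset.card_pos.mpr ⟨e, he⟩
        omega
      obtain ⟨C, hC, hcov⟩ := ih S' hsub hcard
      refine ⟨insert w C, ?_, ?_⟩
      · have := Finset.card_insert_le w C
        omega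
      · intro g hg
        by_cases hge : g = e
        · exact ⟨w, Finset.mem_insert_self _ _, hge ▸ hwe⟩
        by_cases hgf : g = f
        · exact ⟨w, Finset.mem_insert_self _ _, hgf ▸ hwf⟩
        obtain ⟨v, hv, hv2⟩ :=
          hcov g (Finset.mem_erase.mpr ⟨hgf, Finset.mem_erase.mpr ⟨hge, hg⟩⟩)
        exact ⟨v, Finset.mem_insert_of_mem hv, hv2⟩

theorem stmt15 {V : Type*} [Fintype V] [DecidableEq V]
    (p : V → Fin 6) (E : Finset (Finset V))
    (hpart : Rpartite 6 p E) (hint : Intersecting E) (hcard : E.card = 11)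
    (htau : ∀ C : Finset V, IsCover E C → 5 ≤ C.card) :
    (∀ v : V, degree E v ≤ 4) ∧
    (∀ i : Fin 6, (Finset.univ.filter (fun v => p v = i ∧ degree E v = 4)).card ≤ 1) ∧
    (∀ i : Fin 6, (Finset.univ.filter (fun v => p v = i ∧ degree E v = 3)).card ≤ 2) ∧
    (∀ i : Fin 6, ∀ u v : V, p u = i → p v = i →
      ¬ (degree E u = 4 ∧ degree E v = 3)) ∧
    (Finset.univ.filter (fun v : V => degree E v = 3)).card +
      3 * (Finset.univ.filter (fun v : V => degree E v = 4)).card ≤ 18 := by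
  -- The contradiction machine: if the edges avoiding a set `T` of vertices can be
  -- covered by `n` vertices with `T.card + n ≤ 4`, we get a cover of size ≤ 4.
  have key : ∀ (T : Finset V) (n : ℕ), T.card + n ≤ 4 →
      (E.filter (fun e => ∀ v ∈ T, v ∉ e)).card ≤ 2 * n → False := by
    intro T n hn hR
    obtain ⟨C, hC, hcov⟩ := cover_half E hint n _ (Finset.filter_subset _ _) hR
    have hcover : IsCover E (T ∪ C) := by
      intro e heE
      by_cases h : ∀ v ∈ T, v ∉ e
      · obtain ⟨v, hv, hv2⟩ := hcov e (Finset.mem_filter.mpr ⟨heE, h⟩)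
        exact ⟨v, Finset.mem_union_right _ hv, hv2⟩
      · push_neg at h
        obtain ⟨v, hv, hv2⟩ := h
        exact ⟨v, Finset.mem_union_left _ hv, hv2⟩
    have h5 := htau _ hcover
    have hle := Finset.card_union_le T C
    omega
  -- Counting: vertices in the same class lie in pairwise disjoint sets of edges.
  have hcount : ∀ (i : Fin 6) (T : Finset V), (∀ v ∈ T, p v = i) →
      (E.filter (fun e => ∀ v ∈ T, v ∉ e)).card + (T.sum (fun v => degree E v)) ≤ 11 := by
    intro i T hT
    have hdisj : ∀ u ∈ T, ∀ v ∈ T, u ≠ v →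
        Disjoint (E.filter (fun e => u ∈ e)) (E.filter (fun e => v ∈ e)) := by
      intro u hu v hv huv
      refine Finset.disjoint_left.mpr ?_
      intro e heu hev
      simp only [Finset.mem_filter] at heu hev
      obtain ⟨w, hw, huniq⟩ := hpart e heu.1 i
      exact huv ((huniq u ⟨heu.2, hT u hu⟩).trans (huniq v ⟨hev.2, hT v hv⟩).symm)
    have h1 : (T.biUnion (fun v => E.filter (fun e => v ∈ e))).card
        = T.sum (fun v => degree E v) := Finset.card_biUnion hdisj
    have h2 : T.biUnion (fun v => E.filter (fun e => v ∈ e))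
        ⊆ E.filter (fun e => ¬ ∀ v ∈ T, v ∉ e) := by
      intro e he
      simp only [Finset.mem_biUnion, Finset.mem_filter] at he ⊢
      obtain ⟨v, hv, heE, hve⟩ := he
      refine ⟨heE, ?_⟩
      push_neg
      exact ⟨v, hv, hve⟩
    have h3 := Finset.card_filter_add_card_filter_not
      (s := E) (p := fun e => ∀ v ∈ T, v ∉ e)
    have h4 := Finset.card_le_card h2
    rw [h1] at h4
    omega
  -- (a) maximum degree 4
  have hdeg : ∀ v : V, degree E v ≤ 4 := by
    intro v
    by_contra h
    push_neg at h
    have hc := hcount (p v) {v} (by simp)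
    rw [Finset.sum_singleton] at hc
    exact key {v} 3 (by simp) (by omega)
  -- (d) no class with both a degree-4 and a degree-3 vertex
  have hno : ∀ i : Fin 6, ∀ u v : V, p u = i → p v = i →
      ¬ (degree E u = 4 ∧ degree E v = 3) := by
    intro i u v hu hv ⟨h4, h3⟩
    have huv : u ≠ v := by intro h; rw [h, h3] at h4; omega
    have hc := hcount i {u, v} (by
      intro w hw
      rcases Finset.mem_insert.mp hw with rfl | hw
      · exact hu
      · rw [Finset.mem_singleton.mp hw]; exact hv)
    rw [Finset.sum_insert (by simp [huv]), Finset.sum_singleton] at hc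
    have hTc : ({u, v} : Finset V).card ≤ 2 := Finset.card_insert_le u {v}
    exact key {u, v} 2 (by omega) (by omega)
  -- (b) at most one degree-4 vertex per class
  have h4le : ∀ i : Fin 6,
      (Finset.univ.filter (fun v => p v = i ∧ degree E v = 4)).card ≤ 1 := by
    intro i
    by_contra h
    push_neg at h
    obtain ⟨u, hu, v, hv, huv⟩ := Finset.one_lt_card.mp h
    simp only [Finset.mem_filter, Finset.mem_univ, true_and] at hu hv
    have hc := hcount i {u, v} (by
      intro w hw
      rcases Finset.mem_insert.mp hw with rfl | hw
      · exact hu.1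
      · rw [Finset.mem_singleton.mp hw]; exact hv.1)
    rw [Finset.sum_insert (by simp [huv]), Finset.sum_singleton] at hc
    have hTc : ({u, v} : Finset V).card ≤ 2 := Finset.card_insert_le u {v}
    have hu4 := hu.2
    have hv4 := hv.2
    exact key {u, v} 2 (by omega) (by omega)
  -- (c) at most two degree-3 vertices per class
  have h3le : ∀ i : Fin 6,
      (Finset.univ.filter (fun v => p v = i ∧ degree E v = 3)).card ≤ 2 := by
    intro i
    by_contra h
    push_neg at h
    obtain ⟨u, hu, v, hv, w, hw, huv, huw, hvw⟩ := Finset.two_lt_card.mp h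
    simp only [Finset.mem_filter, Finset.mem_univ, true_and] at hu hv hw
    have hc := hcount i {u, v, w} (by
      intro z hz
      rcases Finset.mem_insert.mp hz with rfl | hz
      · exact hu.1
      rcases Finset.mem_insert.mp hz with rfl | hz
      · exact hv.1
      · rw [Finset.mem_singleton.mp hz]; exact hw.1)
    rw [Finset.sum_insert (by simp [huv, huw]), Finset.sum_insert (by simp [hvw]),
      Finset.sum_singleton] at hc
    have hTc : ({u, v, w} : Finset V).card ≤ 3 := by
      have h1 := Finset.card_insert_le u {v, w}
      have h2 := Finset.card_insert_le v ({w} : Finset V)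
      have h3 : ({w} : Finset V).card = 1 := Finset.card_singleton w
      omega
    have hu3 := hu.2
    have hv3 := hv.2
    have hw3 := hw.2
    exact key {u, v, w} 1 (by omega) (by omega)
  refine ⟨hdeg, h4le, h3le, hno, ?_⟩
  -- (e) splitting the degree-d vertices by class
  have hsplit : ∀ d : ℕ, (Finset.univ.filter (fun v : V => degree E v = d)).card
      = ∑ i : Fin 6, (Finset.univ.filter (fun v => p v = i ∧ degree E v = d)).card := by
    intro d
    rw [Finset.card_eq_sum_card_fiberwise
      (f := p) (t := Finset.univ) (fun v _ => Finset.mem_univ _)]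
    refine Finset.sum_congr rfl fun i _ => ?_
    congr 1
    rw [Finset.filter_filter]
    ext v
    simp only [Finset.mem_filter, Finset.mem_univ, true_and]
    tauto
  -- per-class contribution is at most 3
  have percl : ∀ i : Fin 6,
      (Finset.univ.filter (fun v => p v = i ∧ degree E v = 3)).card +
        3 * (Finset.univ.filter (fun v => p v = i ∧ degree E v = 4)).card ≤ 3 := by
    intro i
    rcases (Finset.univ.filter (fun v => p v = i ∧ degree E v = 4)).eq_empty_or_nonempty
      with h4 | ⟨u, hu⟩
    · have := h3le i
      rw [h4]
      simpa using by omega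
    · simp only [Finset.mem_filter, Finset.mem_univ, true_and] at hu
      have hB : (Finset.univ.filter (fun v => p v = i ∧ degree E v = 3)) = ∅ := by
        rw [Finset.filter_eq_empty_iff]
        intro v _ hv
        exact hno i u v hu.1 hv.1 ⟨hu.2, hv.2⟩
      have := h4le i
      rw [hB]
      simp only [Finset.card_empty]
      omega
  rw [hsplit 3, hsplit 4, Finset.mul_sum, ← Finset.sum_add_distrib]
  calc (∑ i : Fin 6, ((Finset.univ.filter (fun v => p v = i ∧ degree E v = 3)).card +
        3 * (Finset.univ.filter (fun v => p v = i ∧ degree E v = 4)).card))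
      ≤ ∑ _i : Fin 6, 3 := Finset.sum_le_sum (fun i _ => percl i)
    _ = 18 := by simp
end

section
/- The following 6-partite hypergraph with 15 edges on 30 vertices is intersecting and has cover number exactly 5: vertex classes V1={a1,a3,a4,a6,a8}, V2={b1,b2,b4,b8,b12}, V3={c1,c2,c4,c7,c11}, V4={d1,d2,d3,d9,d11}, V5={e1,e2,e3,e5,e7}, V6={f1,f2,f3,f5,f7}; edges H1=(a1,b1,c1,d1,e1,f1), H2=(a1,b2,c2,d2,e2,f2), H3=(a3,b1,c2,d3,e3,f3), H4=(a4,b4,c4,d1,e2,f3), H5=(a3,b4,c1,d2,e5,f5), H6=(a6,b2,c4,d3,e5,f1), H7=(a1,b4,c7,d3,e7,f7), H8=(a8,b8,c2,d1,e5,f7), H9=(a8,b2,c1,d9,e7,f3), H10=(a3,b8,c7,d9,e2,f1), H11=(a1,b8,c11,d11,e5,f3), H12=(a8,b12,c1,d3,e2,f3), H13=(a8,b4,c2,d11,e1,f1), H14=(a4,b8,c1,d3,e2,f1), H15=(a8,b8,c1,d3,e2,f5). In particular f(6) ≤ 15. -/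
/-- Class map: vertices `5*i`–`5*i+4` form class `i`. The labels are:
`a1 a3 a4 a6 a8 | b1 b2 b4 b8 b12 | c1 c2 c4 c7 c11 | d1 d2 d3 d9 d11 |
 e1 e2 e3 e5 e7 | f1 f2 f3 f5 f7` as vertices `0`–`29`. -/
def p6 : Fin 30 → Fin 6 := fun v => ⟨v.val / 5, by omega⟩

def E6 : Finset (Finset (Fin 30)) :=
  { {0,5,10,15,20,25}, {0,6,11,16,21,26}, {1,5,11,17,22,27}, {2,7,12,15,21,27},
    {1,7,10,16,23,28}, {3,6,12,17,23,25}, {0,7,13,17,24,29}, {4,8,11,15,23,29},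
    {4,6,10,18,24,27}, {1,8,13,18,21,25}, {0,8,14,19,23,27}, {4,9,10,17,21,27},
    {4,7,11,19,20,25}, {2,8,10,17,21,25}, {4,8,10,17,21,28} }

/-!
A set of at most `k + 1` vertices meeting every edge contains a vertex `v` of any given edge,
and the edges avoiding `v` are then met by at most `k` vertices. Branching over the six
vertices of an edge gives a search tree with at most `6⁴` leaves deciding whether four vertices
can meet all fifteen edges; evaluating it shows that they cannot, while five can.
Being `6`-partite and intersecting are edge-by-edge checks.
-/

open Finset

section Cover

variable {α : Type*} [DecidableEq α]

def coverSearch : ℕ → List (Finset α) → Bool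
  | _, [] => true
  | 0, _ :: _ => false
  | k + 1, e :: es => decide (∃ v ∈ e, coverSearch k (es.filter (v ∉ ·)) = true)

theorem coverSearch_iff (k : ℕ) (L : List (Finset α)) :
    coverSearch k L = true ↔ ∃ C : Finset α, C.card ≤ k ∧ ∀ e ∈ L, ∃ v ∈ C, v ∈ e := by
  induction k generalizing L with
  | zero => cases L <;> simp [coverSearch]
  | succ k ih =>
    cases L with
    | nil => exact iff_of_true rfl ⟨∅, by simp⟩
    | cons e es =>
      simp only [coverSearch, decide_eq_true_iff, ih, List.forall_mem_cons, List.mem_filter]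
      constructor
      · rintro ⟨v, hve, C, hCk, hC⟩
        refine ⟨insert v C, (card_insert_le _ _).trans (by omega),
          ⟨v, mem_insert_self _ _, hve⟩, fun e' he' => ?_⟩
        by_cases hv : v ∈ e'
        · exact ⟨v, mem_insert_self _ _, hv⟩
        · obtain ⟨w, hwC, hwe'⟩ := hC e' ⟨he', hv⟩
          exact ⟨w, mem_insert_of_mem hwC, hwe'⟩
      · rintro ⟨C, hCk, ⟨v, hvC, hve⟩, hC⟩
        refine ⟨v, hve, C.erase v, by rw [card_erase_of_mem hvC]; omega, fun e' he' => ?_⟩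
        obtain ⟨w, hwC, hwe'⟩ := hC e' he'.1
        exact ⟨w, mem_erase.2 ⟨fun h => he'.2 (h ▸ hwe'), hwC⟩, hwe'⟩

def hasCoverOfCardLE (k : ℕ) (E : Finset (Finset α)) : Bool :=
  Quot.lift (coverSearch k) (fun L L' (h : L.Perm L') => by
    rw [Bool.eq_iff_iff, coverSearch_iff, coverSearch_iff]
    simp only [h.mem_iff]) E.val

theorem hasCoverOfCardLE_iff (k : ℕ) (E : Finset (Finset α)) :
    hasCoverOfCardLE k E = true ↔ ∃ C : Finset α, C.card ≤ k ∧ IsCover E C := by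
  obtain ⟨⟨L⟩, _⟩ := E
  exact coverSearch_iff k L

end Cover

theorem rpartite_of_image_eq_univ {V : Type*} [DecidableEq V] {r : ℕ} {p : V → Fin r}
    {E : Finset (Finset V)} (h : ∀ e ∈ E, e.image p = univ ∧ e.card = r) : Rpartite r p E := by
  intro e he i
  obtain ⟨himage, hcard⟩ := h e he
  have hinj : Set.InjOn p e :=
    card_image_iff.1 (by rw [himage, card_univ, Fintype.card_fin, hcard])
  obtain ⟨v, hv, rfl⟩ := mem_image.1 (himage ▸ mem_univ i)
  exact ⟨v, ⟨hv, rfl⟩, fun w hw => hinj hw.1 hv hw.2⟩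

theorem intersecting_iff_inter_nonempty {V : Type*} [DecidableEq V] (E : Finset (Finset V)) :
    Intersecting E ↔ ∀ e ∈ E, ∀ f ∈ E, (e ∩ f).Nonempty := by
  simp [Intersecting, Finset.Nonempty]

theorem rpartite_E6 : Rpartite 6 p6 E6 := by
  refine rpartite_of_image_eq_univ ?_
  simp only [E6, forall_mem_insert, mem_singleton, forall_eq]
  decide

theorem intersecting_E6 : Intersecting E6 := by
  rw [intersecting_iff_inter_nonempty]
  simp only [E6, forall_mem_insert, mem_singleton, forall_eq]
  -- one `decide` on the whole conjunction exceeds the instance-synthesis size limit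
  repeat' apply And.intro
  all_goals decide

theorem card_E6 : E6.card = 15 := by decide

theorem five_le_card_of_isCover_E6 {C : Finset (Fin 30)} (hC : IsCover E6 C) : 5 ≤ C.card := by
  by_contra! hC4
  have : hasCoverOfCardLE 4 E6 = true := (hasCoverOfCardLE_iff 4 E6).2 ⟨C, by omega, hC⟩
  exact absurd this (by decide)

theorem exists_isCover_E6_card_eq_five : ∃ C : Finset (Fin 30), IsCover E6 C ∧ C.card = 5 := by
  obtain ⟨C, hC5, hC⟩ := (hasCoverOfCardLE_iff 5 E6).1 (by decide)
  exact ⟨C, hC, le_antisymm hC5 (five_le_card_of_isCover_E6 hC)⟩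

theorem hasConfig_six_fifteen : HasConfig 6 15 :=
  ⟨Fin 30, p6, E6, rpartite_E6, intersecting_E6, card_E6, fun _ => five_le_card_of_isCover_E6⟩

theorem stmt16 :
    Rpartite 6 p6 E6 ∧ Intersecting E6 ∧ E6.card = 15 ∧
    (∀ C : Finset (Fin 30), IsCover E6 C → 5 ≤ C.card) ∧
    (∃ C : Finset (Fin 30), IsCover E6 C ∧ C.card = 5) ∧
    f 6 ≤ 15 :=
  ⟨rpartite_E6, intersecting_E6, card_E6, fun _ => five_le_card_of_isCover_E6,
    exists_isCover_E6_card_eq_five, Nat.sInf_le hasConfig_six_fifteen⟩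
end

section
/- f(3) = 3: every 3-partite intersecting hypergraph with at most 2 edges has cover number at most 1, and the 3-partite hypergraph with edges (a1,b1,c1), (a1,b2,c2), (a2,b1,c2) is intersecting with cover number 2. -/
/-- Vertices `0,1` are class `0` (`a1,a2`), `2,3` class `1` (`b1,b2`),
`4,5` class `2` (`c1,c2`). -/
def p3 : Fin 6 → Fin 3 := fun v => ⟨v.val / 2, by omega⟩

def E3 : Finset (Finset (Fin 6)) := { {0,2,4}, {0,3,5}, {1,2,5} }

lemma small_cover_s18 : ∀ (V : Type*) (p : V → Fin 3) (E : Finset (Finset V)),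
      Rpartite 3 p E → Intersecting E → E.card ≤ 2 →
      ∃ C : Finset V, IsCover E C ∧ C.card ≤ 1 := by
  classical
  intro V p E hR hI hcard
  rcases E.eq_empty_or_nonempty with h | ⟨e, he⟩
  · exact ⟨∅, by simp [h, IsCover], by simp⟩
  by_cases hall : ∀ g ∈ E, g = e
  · obtain ⟨v, ⟨hv, _⟩, _⟩ := hR e he 0
    refine ⟨{v}, ?_, by simp⟩
    intro g hg
    exact ⟨v, by simp, (hall g hg) ▸ hv⟩
  · push_neg at hall
    obtain ⟨f, hf, hfe⟩ := hall
    obtain ⟨v, hve, hvf⟩ := hI e he f hf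
    refine ⟨{v}, ?_, by simp⟩
    intro g hg
    have : g = e ∨ g = f := by
      by_contra hc
      push_neg at hc
      have hsub : ({e, f, g} : Finset (Finset V)) ⊆ E := by
        intro x hx
        simp only [Finset.mem_insert, Finset.mem_singleton] at hx
        rcases hx with rfl | rfl | rfl <;> assumption
      have h3 : ({e, f, g} : Finset (Finset V)).card = 3 := by
        rw [Finset.card_insert_of_notMem (by simp [Ne.symm hfe, Ne.symm hc.1]),
          Finset.card_insert_of_notMem (by simp [Ne.symm hc.2]), Finset.card_singleton]
      have := Finset.card_le_card hsub
      omega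
    rcases this with rfl | rfl
    · exact ⟨v, by simp, hve⟩
    · exact ⟨v, by simp, hvf⟩

theorem stmt18 :
    (∀ (V : Type*) (p : V → Fin 3) (E : Finset (Finset V)),
      Rpartite 3 p E → Intersecting E → E.card ≤ 2 →
      ∃ C : Finset V, IsCover E C ∧ C.card ≤ 1) ∧
    (Rpartite 3 p3 E3 ∧ Intersecting E3 ∧ E3.card = 3 ∧
      (∀ C : Finset (Fin 6), IsCover E3 C → 2 ≤ C.card) ∧
      (∃ C : Finset (Fin 6), IsCover E3 C ∧ C.card = 2)) ∧
    f 3 = 3 := by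
  have hR3 : Rpartite 3 p3 E3 := by unfold Rpartite p3 E3; simp only [ExistsUnique]; decide
  have hI3 : Intersecting E3 := by unfold Intersecting E3; decide
  have hc3 : E3.card = 3 := by decide
  have hcov : ∀ C : Finset (Fin 6), IsCover E3 C → 2 ≤ C.card := by
    unfold IsCover E3
    set_option maxRecDepth 20000 in decide
  refine ⟨small_cover_s18, ⟨hR3, hI3, hc3, hcov, ⟨{0, 5}, ?_, rfl⟩⟩, ?_⟩
  · unfold IsCover E3; decide
  · have hmem : HasConfig 3 3 := ⟨Fin 6, p3, E3, hR3, hI3, hc3, fun C hC => hcov C hC⟩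
    unfold f
    apply le_antisymm
    · exact Nat.sInf_le hmem
    · apply le_csInf ⟨3, by exact hmem⟩
      rintro m ⟨V, p, E, hR, hI, hc, hC⟩
      by_contra hlt
      push_neg at hlt
      obtain ⟨C, hcov', hc1⟩ := small_cover_s18 V p E hR hI (by omega)
      have := hC C hcov'
      omega
end
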